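/- arXiv:1709.08345 — 7 statements merged into one kernel-verified Lean document; each statement's English description precedes it below -/
import Mathlib

section
/- Let F : ℝ^N → ℝ be differentiable, where the variables are indexed as y_j^K with 1 ≤ j ≤ n and 1 ≤ K ≤ M. Suppose F satisfies the Zermelo conditions: for all j, l, ∑_K (∂F/∂y_j^K) · y_l^K = δ_l^j · F. Then for every k ≥ 1, differentiating yields: ∑_{K_1} (∂^k F / ∂y_{j_1}^{K_1} ⋯ ∂y_{j_k}^{K_k}) · y_{i_1}^{K_1} = δ_{i_1}^{j_1} · ∂^{k-1}F/∂y_{j_2}^{K_2}⋯∂y_{j_k}^{K_k} − ∑_{s=2}^{k} δ_{i_1}^{j_s} · (∂^{k-1}F with index j_s replaced by j_1). -/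
/-- The standard basis direction `∂/∂y_j^K` in the space `ℝ^{n×M}` of velocity variables. -/
noncomputable def basisDir (n M : ℕ) (j : Fin n) (K : Fin M) : Fin n → Fin M → ℝ :=
  Pi.single j (Pi.single K 1)

section Aux

variable {E : Type*} [NormedAddCommGroup E] [NormedSpace ℝ E]

/-- Iterated directional derivative: differentiate first along `m 1, …`, then along `m 0`. -/
noncomputable def multiDirDeriv : (k : ℕ) → (Fin k → E) → (E → ℝ) → (E → ℝ)
  | 0, _, f => f
  | (k+1), m, f => fun y => fderiv ℝ (multiDirDeriv k (Fin.tail m) f) y (m 0)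

@[simp] lemma multiDirDeriv_zero (m : Fin 0 → E) (f : E → ℝ) :
    multiDirDeriv 0 m f = f := rfl

lemma multiDirDeriv_succ (k : ℕ) (m : Fin (k+1) → E) (f : E → ℝ) :
    multiDirDeriv (k+1) m f =
      fun y => fderiv ℝ (multiDirDeriv k (Fin.tail m) f) y (m 0) := rfl

lemma contDiff_dirDeriv {f : E → ℝ} (hf : ContDiff ℝ (⊤ : ℕ∞) f) (v : E) :
    ContDiff ℝ (⊤ : ℕ∞) (fun y => fderiv ℝ f y v) := by
  exact (ContinuousLinearMap.apply ℝ ℝ v).contDiff.comp (hf.fderiv_right (by simp))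

lemma contDiff_multiDirDeriv {f : E → ℝ} (hf : ContDiff ℝ (⊤ : ℕ∞) f) :
    ∀ (k : ℕ) (m : Fin k → E), ContDiff ℝ (⊤ : ℕ∞) (multiDirDeriv k m f)
  | 0, _ => hf
  | (k+1), m => contDiff_dirDeriv (contDiff_multiDirDeriv hf k (Fin.tail m)) (m 0)

lemma fderiv_dirDeriv_comm {f : E → ℝ} (hf : ContDiff ℝ (⊤ : ℕ∞) f) (v w : E) (x : E) :
    fderiv ℝ (fun y => fderiv ℝ f y v) x w = fderiv ℝ (fun y => fderiv ℝ f y w) x v := by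
  have hdf : DifferentiableAt ℝ (fderiv ℝ f) x :=
    ((hf.fderiv_right (m := (⊤ : ℕ∞)) (by simp)).differentiable (by simp)).differentiableAt
  have h1 : fderiv ℝ (fun y => fderiv ℝ f y v) x w = fderiv ℝ (fderiv ℝ f) x w v := by
    have := fderiv_clm_apply (𝕜 := ℝ) (c := fderiv ℝ f) (u := fun _ => v) hdf
      (differentiableAt_const v)
    simp [this]
  have h2 : fderiv ℝ (fun y => fderiv ℝ f y w) x v = fderiv ℝ (fderiv ℝ f) x v w := by
    have := fderiv_clm_apply (𝕜 := ℝ) (c := fderiv ℝ f) (u := fun _ => w) hdf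
      (differentiableAt_const w)
    simp [this]
  rw [h1, h2]
  exact ((hf.contDiffAt.isSymmSndFDerivAt (by rw [minSmoothness_of_isRCLikeNormedField]; exact WithTop.coe_le_coe.mpr le_top)).eq w v)

/-- The iterated Fréchet derivative applied to fixed directions agrees with the iterated
directional derivative. -/
lemma iteratedFDeriv_eq_multiDirDeriv {f : E → ℝ} (hf : ContDiff ℝ (⊤ : ℕ∞) f) :
    ∀ (k : ℕ) (m : Fin k → E) (x : E),
      iteratedFDeriv ℝ k f x m = multiDirDeriv k m f x := by
  intro k
  induction k with
  | zero => intro m x; simp [iteratedFDeriv_zero_apply]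
  | succ k ih =>
    intro m x
    have hdiff : DifferentiableAt ℝ (iteratedFDeriv ℝ k f) x :=
      (hf.differentiable_iteratedFDeriv
        (by exact_mod_cast lt_top_iff_ne_top.2 (by simp))).differentiableAt
    have key : fderiv ℝ (fun y => iteratedFDeriv ℝ k f y (Fin.tail m)) x (m 0)
        = fderiv ℝ (iteratedFDeriv ℝ k f) x (m 0) (Fin.tail m) :=
      fderiv_continuousMultilinear_apply_const_apply hdiff (Fin.tail m) (m 0)
    have hfun : (fun y => iteratedFDeriv ℝ k f y (Fin.tail m))
        = multiDirDeriv k (Fin.tail m) f := funext fun y => ih (Fin.tail m) y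
    rw [iteratedFDeriv_succ_apply_left, ← key, hfun, multiDirDeriv_succ]

end Aux

section Main

variable {n M : ℕ}

lemma basisDir_apply (j : Fin n) (K : Fin M) (i : Fin n) (L : Fin M) :
    basisDir n M j K i L = if i = j then (if L = K then (1:ℝ) else 0) else 0 := by
  unfold basisDir
  rcases eq_or_ne i j with h | h
  · subst h; simp [Pi.single_apply]
  · simp [Pi.single_apply, h]

lemma fderiv_coord (i : Fin n) (K : Fin M) (Y v : Fin n → Fin M → ℝ) :
    fderiv ℝ (fun y : Fin n → Fin M → ℝ => y i K) Y v = v i K := by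
  have : HasFDerivAt (fun y : Fin n → Fin M → ℝ => y i K)
      ((ContinuousLinearMap.proj (R := ℝ) (φ := fun _ : Fin M => ℝ) K).comp
        (ContinuousLinearMap.proj (R := ℝ) (φ := fun _ : Fin n => (Fin M → ℝ)) i)) Y :=
    ((ContinuousLinearMap.proj (R := ℝ) (φ := fun _ : Fin M => ℝ) K).comp
        (ContinuousLinearMap.proj (R := ℝ) (φ := fun _ : Fin n => (Fin M → ℝ)) i)).hasFDerivAt
  rw [this.fderiv]; rfl

lemma diff_coord (i : Fin n) (K : Fin M) :
    Differentiable ℝ (fun y : Fin n → Fin M → ℝ => y i K) :=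
  ((ContinuousLinearMap.proj (R := ℝ) (φ := fun _ : Fin M => ℝ) K).comp
      (ContinuousLinearMap.proj (R := ℝ) (φ := fun _ : Fin n => (Fin M → ℝ)) i)).differentiable

lemma fderiv_ite_const (c : Prop) [Decidable c] {g : (Fin n → Fin M → ℝ) → ℝ}
    (hg : Differentiable ℝ g) (Y v : Fin n → Fin M → ℝ) :
    fderiv ℝ (fun y => if c then g y else 0) Y v = if c then fderiv ℝ g Y v else 0 := by
  by_cases hc : c <;> simp [hc]

/-- Main auxiliary induction: the differentiated Zermelo conditions in terms of iterated
directional derivatives. -/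
lemma aux_zermelo (F : (Fin n → Fin M → ℝ) → ℝ) (hF : ContDiff ℝ (⊤ : ℕ∞) F)
    (hZermelo : ∀ (Y : Fin n → Fin M → ℝ) (j l : Fin n),
      ∑ K : Fin M, fderiv ℝ F Y (basisDir n M j K) * Y l K =
        (if l = j then F Y else 0)) :
    ∀ (k : ℕ) (j : Fin k → Fin n) (K : Fin k → Fin M) (a i₁ : Fin n)
      (Y : Fin n → Fin M → ℝ),
      ∑ K₁ : Fin M,
          fderiv ℝ (multiDirDeriv k (fun s => basisDir n M (j s) (K s)) F) Y
            (basisDir n M a K₁) * Y i₁ K₁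
        = (if i₁ = a then multiDirDeriv k (fun s => basisDir n M (j s) (K s)) F Y else 0)
          - ∑ s : Fin k,
              (if i₁ = j s then
                multiDirDeriv k (fun t => basisDir n M (Function.update j s a t) (K t)) F Y
              else 0) := by
  intro k
  induction k with
  | zero =>
    intro j K a i₁ Y
    simpa using hZermelo Y a i₁
  | succ k ih =>
    intro j K a i₁ Y
    have hv : ∀ (i : Fin n) (L : Fin M), basisDir n M (j 0) (K 0) i L
        = if i = j 0 then (if L = K 0 then (1:ℝ) else 0) else 0 := basisDir_apply _ _
    set v := basisDir n M (j 0) (K 0) with hvdef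
    set h := multiDirDeriv k (fun s : Fin k => basisDir n M (j s.succ) (K s.succ)) F with hh
    have hhsmooth : ContDiff ℝ (⊤ : ℕ∞) h := contDiff_multiDirDeriv hF k _
    have hmdd : ∀ y, multiDirDeriv (k+1) (fun s => basisDir n M (j s) (K s)) F y
        = fderiv ℝ h y v := fun y => rfl
    -- the replaced-index iterated derivatives, k-th order
    set G : Fin k → ((Fin n → Fin M → ℝ) → ℝ) := fun s =>
      multiDirDeriv k
        (fun t => basisDir n M (Function.update (fun u : Fin k => j u.succ) s a t) (K t.succ)) F
      with hG
    have hGsmooth : ∀ s, ContDiff ℝ (⊤ : ℕ∞) (G s) := fun s => contDiff_multiDirDeriv hF k _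
    -- the replaced-index iterated derivatives, (k+1)-st order
    have hGsucc : ∀ s : Fin k,
        fderiv ℝ (G s) Y v
          = multiDirDeriv (k+1)
              (fun t => basisDir n M (Function.update j s.succ a t) (K t)) F Y := by
      intro s
      rw [multiDirDeriv_succ]
      have hdir : Fin.tail (fun t : Fin (k+1) =>
            basisDir n M (Function.update j s.succ a t) (K t))
          = fun t : Fin k =>
              basisDir n M (Function.update (fun u : Fin k => j u.succ) s a t) (K t.succ) := by
        funext t
        show basisDir n M (Function.update j s.succ a t.succ) (K t.succ)
          = basisDir n M (Function.update (fun u : Fin k => j u.succ) s a t) (K t.succ)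
        congr 1
        simp [Function.update_apply, Fin.succ_inj]
      simp only [hdir,
        Function.update_of_ne (show (0 : Fin (k+1)) ≠ s.succ from (Fin.succ_ne_zero s).symm)]
      rfl
    have hG0 : fderiv ℝ h Y (basisDir n M a (K 0))
        = multiDirDeriv (k+1)
            (fun t => basisDir n M (Function.update j 0 a t) (K t)) F Y := by
      rw [multiDirDeriv_succ]
      have hdir : Fin.tail (fun t : Fin (k+1) =>
            basisDir n M (Function.update j 0 a t) (K t))
          = fun t : Fin k => basisDir n M (j t.succ) (K t.succ) := by
        funext t
        show basisDir n M (Function.update j 0 a t.succ) (K t.succ)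
          = basisDir n M (j t.succ) (K t.succ)
        rw [Function.update_of_ne (Fin.succ_ne_zero t)]
      simp only [hdir, Function.update_self]
      rfl
    -- commute the two derivatives
    have hcomm : ∀ K₁ : Fin M,
        fderiv ℝ (multiDirDeriv (k+1) (fun s => basisDir n M (j s) (K s)) F) Y
            (basisDir n M a K₁)
          = fderiv ℝ (fun y => fderiv ℝ h y (basisDir n M a K₁)) Y v := by
      intro K₁
      have : (multiDirDeriv (k+1) (fun s => basisDir n M (j s) (K s)) F)
          = fun y => fderiv ℝ h y v := funext hmdd
      rw [this, fderiv_dirDeriv_comm hhsmooth v (basisDir n M a K₁) Y]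
    have hdh : ∀ (w : Fin n → Fin M → ℝ), Differentiable ℝ (fun y => fderiv ℝ h y w) :=
      fun w => (contDiff_dirDeriv hhsmooth w).differentiable (by simp)
    -- product rule for each K₁
    have hprod : ∀ K₁ : Fin M,
        fderiv ℝ (fun y => fderiv ℝ h y (basisDir n M a K₁) * y i₁ K₁) Y v
          = fderiv ℝ (fun y => fderiv ℝ h y (basisDir n M a K₁)) Y v * Y i₁ K₁
            + fderiv ℝ h Y (basisDir n M a K₁) * v i₁ K₁ := by
      intro K₁
      rw [fderiv_fun_mul ((hdh _).differentiableAt) ((diff_coord i₁ K₁).differentiableAt)]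
      simp [fderiv_coord]
      ring
    have step1 :
        ∑ K₁ : Fin M,
            fderiv ℝ (multiDirDeriv (k+1) (fun s => basisDir n M (j s) (K s)) F) Y
              (basisDir n M a K₁) * Y i₁ K₁
          = fderiv ℝ (fun y => ∑ K₁ : Fin M,
                fderiv ℝ h y (basisDir n M a K₁) * y i₁ K₁) Y v
              - ∑ K₁ : Fin M, fderiv ℝ h Y (basisDir n M a K₁) * v i₁ K₁ := by
      have : ∀ K₁ : Fin M,
          fderiv ℝ (multiDirDeriv (k+1) (fun s => basisDir n M (j s) (K s)) F) Y
              (basisDir n M a K₁) * Y i₁ K₁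
            = fderiv ℝ (fun y => fderiv ℝ h y (basisDir n M a K₁) * y i₁ K₁) Y v
              - fderiv ℝ h Y (basisDir n M a K₁) * v i₁ K₁ := by
        intro K₁
        rw [hcomm K₁]
        have := hprod K₁
        linarith
      rw [Finset.sum_congr rfl fun K₁ _ => this K₁, Finset.sum_sub_distrib]
      congr 1
      rw [fderiv_fun_sum (fun K₁ _ =>
        (((hdh _).differentiableAt).fun_mul ((diff_coord i₁ K₁).differentiableAt)))]
      simp
    -- the subtracted contraction term
    have step2 : ∑ K₁ : Fin M, fderiv ℝ h Y (basisDir n M a K₁) * v i₁ K₁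
        = if i₁ = j 0 then fderiv ℝ h Y (basisDir n M a (K 0)) else 0 := by
      have : ∀ K₁ : Fin M, fderiv ℝ h Y (basisDir n M a K₁) * v i₁ K₁
          = if i₁ = j 0 then (if K₁ = K 0 then fderiv ℝ h Y (basisDir n M a K₁) else 0)
            else 0 := by
        intro K₁
        rw [hv i₁ K₁]
        by_cases h1 : i₁ = j 0 <;> by_cases h2 : K₁ = K 0 <;> simp [h1, h2]
      rw [Finset.sum_congr rfl fun K₁ _ => this K₁]
      by_cases h1 : i₁ = j 0 <;> simp [h1]
    -- apply the induction hypothesis under the outer derivative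
    have hfun : (fun y => ∑ K₁ : Fin M, fderiv ℝ h y (basisDir n M a K₁) * y i₁ K₁)
        = fun y => (if i₁ = a then h y else 0)
            - ∑ s : Fin k, (if i₁ = j s.succ then G s y else 0) :=
      funext fun y => ih (fun u => j u.succ) (fun u => K u.succ) a i₁ y
    have step3 : fderiv ℝ (fun y => ∑ K₁ : Fin M,
          fderiv ℝ h y (basisDir n M a K₁) * y i₁ K₁) Y v
        = (if i₁ = a then multiDirDeriv (k+1) (fun s => basisDir n M (j s) (K s)) F Y else 0)
          - ∑ s : Fin k, (if i₁ = j s.succ then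
              multiDirDeriv (k+1)
                (fun t => basisDir n M (Function.update j s.succ a t) (K t)) F Y else 0) := by
      rw [hfun]
      have hd1 : Differentiable ℝ (fun y => if i₁ = a then h y else 0) := by
        by_cases h1 : i₁ = a
        · simp only [if_pos h1]; exact hhsmooth.differentiable (by simp)
        · simp only [if_neg h1]; exact differentiable_const 0
      have hd2 : ∀ s : Fin k, Differentiable ℝ (fun y => if i₁ = j s.succ then G s y else 0) := by
        intro s
        by_cases h1 : i₁ = j s.succ
        · simp only [if_pos h1]; exact (hGsmooth s).differentiable (by simp)
        · simp only [if_neg h1]; exact differentiable_const 0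
      rw [fderiv_fun_sub (hd1.differentiableAt)
        ((Differentiable.fun_sum (fun s _ => hd2 s)).differentiableAt)]
      simp only [ContinuousLinearMap.coe_sub', Pi.sub_apply]
      congr 1
      · rw [fderiv_ite_const _ (hhsmooth.differentiable (by simp))]
        try rw [hmdd Y]
      · rw [fderiv_fun_sum (fun s _ => (hd2 s).differentiableAt)]
        simp only [ContinuousLinearMap.coe_sum', Finset.sum_apply]
        refine Finset.sum_congr rfl fun s _ => ?_
        rw [fderiv_ite_const _ ((hGsmooth s).differentiable (by simp))]
        by_cases h1 : i₁ = j s.succ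
        · simp only [h1, if_true]; exact hGsucc s
        · simp [h1]
    rw [step1, step2, step3, hG0]
    rw [Fin.sum_univ_succ
      (f := fun s : Fin (k+1) => if i₁ = j s then
        multiDirDeriv (k+1) (fun t => basisDir n M (Function.update j s a t) (K t)) F Y else 0)]
    ring

end Main

/-- differentiating the Zermelo conditions.  `F : ℝ^{n×M} → ℝ` is smooth and
satisfies `∑_K (∂F/∂y_j^K) y_l^K = δ_l^j F`.  Then for every `k ≥ 1` (here order `k+1` with
`k ≥ 0`), contracting the first slot of the `(k+1)`-st derivative with the velocities gives
`δ_{i₁}^{j₁} ∂^k F/∂y_{j₂}^{K₂}…  −  ∑_{s=2}^{k+1} δ_{i₁}^{j_s} (∂^k F with j_s replaced by j₁)`. -/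
theorem differentiated_zermelo_conditions
    (n M : ℕ) (F : (Fin n → Fin M → ℝ) → ℝ) (hF : ContDiff ℝ (⊤ : ℕ∞) F)
    (hZermelo : ∀ (Y : Fin n → Fin M → ℝ) (j l : Fin n),
      ∑ K : Fin M, fderiv ℝ F Y (basisDir n M j K) * Y l K =
        (if l = j then F Y else 0))
    (k : ℕ) (Y : Fin n → Fin M → ℝ)
    (j : Fin (k + 1) → Fin n) (K : Fin (k + 1) → Fin M) (i₁ : Fin n) :
    ∑ K₁ : Fin M,
        iteratedFDeriv ℝ (k + 1) F Y
          (fun s => basisDir n M (j s) (Function.update K 0 K₁ s)) * Y i₁ K₁ =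
      (if i₁ = j 0 then
        iteratedFDeriv ℝ k F Y (fun s : Fin k => basisDir n M (j s.succ) (K s.succ)) else 0)
      - ∑ s : Fin k,
          (if i₁ = j s.succ then
            iteratedFDeriv ℝ k F Y
              (fun t : Fin k =>
                basisDir n M (if t = s then j 0 else j t.succ) (K t.succ)) else 0) := by
  have key := aux_zermelo F hF hZermelo k (fun u => j u.succ) (fun u => K u.succ) (j 0) i₁ Y
  have hL : ∀ K₁ : Fin M,
      iteratedFDeriv ℝ (k + 1) F Y
          (fun s => basisDir n M (j s) (Function.update K 0 K₁ s))
        = fderiv ℝ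
            (multiDirDeriv k (fun s : Fin k => basisDir n M (j s.succ) (K s.succ)) F) Y
            (basisDir n M (j 0) K₁) := by
    intro K₁
    rw [iteratedFDeriv_eq_multiDirDeriv hF, multiDirDeriv_succ]
    have hdir : Fin.tail (fun s : Fin (k+1) => basisDir n M (j s) (Function.update K 0 K₁ s))
        = fun s : Fin k => basisDir n M (j s.succ) (K s.succ) := by
      funext t
      show basisDir n M (j t.succ) (Function.update K 0 K₁ t.succ)
        = basisDir n M (j t.succ) (K t.succ)
      rw [Function.update_of_ne (Fin.succ_ne_zero t)]
    simp only [hdir, Function.update_self]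
  have hR1 : iteratedFDeriv ℝ k F Y (fun s : Fin k => basisDir n M (j s.succ) (K s.succ))
      = multiDirDeriv k (fun s : Fin k => basisDir n M (j s.succ) (K s.succ)) F Y :=
    iteratedFDeriv_eq_multiDirDeriv hF k _ Y
  have hR2 : ∀ s : Fin k,
      iteratedFDeriv ℝ k F Y
          (fun t : Fin k => basisDir n M (if t = s then j 0 else j t.succ) (K t.succ))
        = multiDirDeriv k
            (fun t => basisDir n M (Function.update (fun u : Fin k => j u.succ) s (j 0) t)
              (K t.succ)) F Y := by
    intro s
    rw [iteratedFDeriv_eq_multiDirDeriv hF]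
    congr 1
    funext t
    rw [Function.update_apply]
  simp only [hL, hR1, hR2]
  try exact key
end

section
/- A smooth function F : ℝ^{n×M} → ℝ defined on the set of full-rank n×M matrices (n ≤ M) satisfies F(Y·A) = det(A)·F(Y) for all A in GL_n^+(ℝ) if and only if F satisfies the Zermelo conditions ∑_K y_l^K ∂F/∂y_j^K = δ_l^j F for all 1 ≤ j, l ≤ n. -/
noncomputable def mact {n M : ℕ} (A : Matrix (Fin n) (Fin n) ℝ) (Y : Fin n → Fin M → ℝ) :
    Fin n → Fin M → ℝ := fun j K => ∑ p : Fin n, A j p * Y p K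

lemma mact_of {n M : ℕ} (A : Matrix (Fin n) (Fin n) ℝ) (Y : Fin n → Fin M → ℝ) :
    Matrix.of (mact A Y) = A * Matrix.of Y := by
  ext a b; simp [mact, Matrix.mul_apply]

lemma mact_mact {n M : ℕ} (A B : Matrix (Fin n) (Fin n) ℝ) (Y : Fin n → Fin M → ℝ) :
    mact A (mact B Y) = mact (A * B) Y := by
  funext a b
  simp only [mact, Matrix.mul_apply, Finset.sum_mul, Finset.mul_sum]
  rw [Finset.sum_comm]
  ring_nf

lemma mact_rank {n M : ℕ} (A : Matrix (Fin n) (Fin n) ℝ) (hA : IsUnit A.det)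
    (Y : Fin n → Fin M → ℝ) (hY : (Matrix.of Y).rank = n) :
    (Matrix.of (mact A Y)).rank = n := by
  rw [mact_of, Matrix.rank_mul_eq_right_of_isUnit_det A (Matrix.of Y) hA, hY]

lemma sum_basisDir {n M : ℕ} (v : Fin n → Fin M → ℝ) :
    v = ∑ j : Fin n, ∑ K : Fin M, v j K • basisDir n M j K := by
  funext a b
  simp [basisDir, Finset.sum_apply, Pi.single_apply, ite_apply, smul_eq_mul,
    mul_ite, mul_zero, mul_one, Finset.sum_ite_eq', Finset.sum_ite_eq]

lemma mact_one {n M : ℕ} (W : Fin n → Fin M → ℝ) : mact 1 W = W := by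
  funext a b
  simp [mact, Matrix.one_apply, ite_mul, zero_mul, Finset.sum_ite_eq, Finset.sum_ite_eq']

lemma fderiv_mact {n M : ℕ} (F : (Fin n → Fin M → ℝ) → ℝ) (Z : Fin n → Fin M → ℝ)
    (hz : ∀ j l : Fin n, ∑ K : Fin M, fderiv ℝ F Z (basisDir n M j K) * Z l K =
      (if l = j then F Z else 0))
    (E : Matrix (Fin n) (Fin n) ℝ) :
    fderiv ℝ F Z (mact E Z) = E.trace * F Z := by
  rw [sum_basisDir (mact E Z)]
  simp only [map_sum, map_smul, smul_eq_mul]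
  have : ∀ j : Fin n, ∑ K : Fin M, mact E Z j K * fderiv ℝ F Z (basisDir n M j K)
      = E j j * F Z := by
    intro j
    have : ∑ K : Fin M, mact E Z j K * fderiv ℝ F Z (basisDir n M j K)
        = ∑ p : Fin n, E j p * (∑ K : Fin M, fderiv ℝ F Z (basisDir n M j K) * Z p K) := by
      simp only [mact, Finset.sum_mul, Finset.mul_sum]
      rw [Finset.sum_comm]
      apply Finset.sum_congr rfl; intros; apply Finset.sum_congr rfl; intros; ring
    rw [this]
    simp only [hz]
    simp [mul_ite, mul_zero, Finset.sum_ite_eq, Finset.sum_ite_eq']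
  simp only [this]
  rw [← Finset.sum_mul, Matrix.trace]
  rfl

section main
variable {n M : ℕ} (F : (Fin n → Fin M → ℝ) → ℝ)
  (hF : ∀ Z : Fin n → Fin M → ℝ, (Matrix.of Z).rank = n → ContDiffAt ℝ (⊤ : ℕ∞) F Z)
  (hz : ∀ Z : Fin n → Fin M → ℝ, (Matrix.of Z).rank = n → ∀ j l : Fin n,
      ∑ K : Fin M, fderiv ℝ F Z (basisDir n M j K) * Z l K = (if l = j then F Z else 0))

include hF hz

lemma trans_inv (i j : Fin n) (hij : i ≠ j) (c : ℝ) (W : Fin n → Fin M → ℝ)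
    (hW : (Matrix.of W).rank = n) :
    F (mact (Matrix.transvection i j c) W) = F W := by
  set V : Fin n → Fin M → ℝ := mact (Matrix.single i j 1) W with hV
  set Z : ℝ → (Fin n → Fin M → ℝ) := fun t => W + t • V with hZ
  have hZt : ∀ t, Z t = mact (Matrix.transvection i j t) W := by
    intro t; funext a b
    simp only [hZ, Pi.add_apply, Pi.smul_apply, smul_eq_mul, hV, mact,
      Matrix.transvection, Matrix.add_apply, Matrix.one_apply, Matrix.single,
      Matrix.of_apply, ite_and, add_mul, ite_mul, zero_mul, one_mul,
      Finset.sum_add_distrib, Finset.mul_sum, mul_ite, mul_zero]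
    by_cases h : i = a <;>
      simp [h, Finset.sum_ite_eq, Finset.sum_ite_eq'] <;> ring
  have hrank : ∀ t, (Matrix.of (Z t)).rank = n := by
    intro t
    rw [hZt t]
    exact mact_rank _ (by rw [Matrix.det_transvection_of_ne i j hij]; exact isUnit_one) W hW
  have hderiv : ∀ t, HasDerivAt (fun s => F (Z s)) 0 t := by
    intro t
    have h1 : HasDerivAt Z V t := by
      simpa [hZ] using ((hasDerivAt_id t).smul_const V).const_add W
    have h2 : HasFDerivAt F (fderiv ℝ F (Z t)) (Z t) :=
      ((hF _ (hrank t)).differentiableAt (by simp)).hasFDerivAt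
    have h3 : HasDerivAt (fun s => F (Z s)) (fderiv ℝ F (Z t) V) t := h2.comp_hasDerivAt t h1
    have hVeq : V = mact (Matrix.single i j 1) (Z t) := by
      rw [hZt t, mact_mact]
      congr 1
      simp [Matrix.transvection, Matrix.mul_add, hij.symm, hV]
    rw [hVeq] at h3
    rw [fderiv_mact F (Z t) (hz _ (hrank t)) _] at h3
    simpa [hij.symm, Matrix.trace_single_eq_of_ne i j (1:ℝ) hij] using h3
  have hconst := is_const_of_deriv_eq_zero (fun t => (hderiv t).differentiableAt)
    (fun t => (hderiv t).deriv) c 0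
  have h0 : Z 0 = W := by simp [hZ]
  rw [← hZt c, hconst, h0]


lemma scale_inv (i : Fin n) (d : ℝ) (hd : 0 < d) (W : Fin n → Fin M → ℝ)
    (hW : (Matrix.of W).rank = n) :
    F (mact (Matrix.diagonal (fun p => if p = i then d else 1)) W) = d * F W := by
  set V : Fin n → Fin M → ℝ := mact (Matrix.single i i 1) W with hV
  set Z : ℝ → (Fin n → Fin M → ℝ) := fun t => W + (Real.exp t - 1) • V with hZ
  have hZt : ∀ t, Z t = mact (Matrix.diagonal (fun p => if p = i then Real.exp t else 1)) W := by
    intro t; funext a b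
    simp only [hZ, Pi.add_apply, Pi.smul_apply, smul_eq_mul, hV, mact,
      Matrix.diagonal_apply, Matrix.single, Matrix.of_apply, ite_and, ite_mul, zero_mul,
      one_mul, Finset.mul_sum, mul_ite, mul_zero]
    by_cases h : a = i
    · subst h; simp [Finset.sum_ite_eq, Finset.sum_ite_eq']; ring
    · simp [h, Ne.symm h, Finset.sum_ite_eq, Finset.sum_ite_eq']
  have hrank : ∀ t, (Matrix.of (Z t)).rank = n := by
    intro t
    rw [hZt t]
    refine mact_rank _ ?_ W hW
    rw [Matrix.det_diagonal]
    have : ∏ p : Fin n, (if p = i then Real.exp t else 1) = Real.exp t := by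
      simp [Finset.prod_ite_eq', Finset.prod_ite_eq]
    rw [this]
    exact (ne_of_gt (Real.exp_pos t)).isUnit
  have hderiv : ∀ t, HasDerivAt (fun s => F (Z s)) (F (Z t)) t := by
    intro t
    have h1 : HasDerivAt Z (Real.exp t • V) t := by
      simpa [hZ] using (((Real.hasDerivAt_exp t).sub_const 1).smul_const V).const_add W
    have h2 : HasFDerivAt F (fderiv ℝ F (Z t)) (Z t) :=
      ((hF _ (hrank t)).differentiableAt (by simp)).hasFDerivAt
    have h3 : HasDerivAt (fun s => F (Z s)) (fderiv ℝ F (Z t) (Real.exp t • V)) t :=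
      h2.comp_hasDerivAt t h1
    have hVeq : Real.exp t • V = mact (Matrix.single i i 1) (Z t) := by
      rw [hZt t, mact_mact]
      funext a b
      simp only [Pi.smul_apply, smul_eq_mul, hV, mact, Matrix.mul_apply,
        Matrix.single, Matrix.diagonal_apply, Matrix.of_apply, ite_and, ite_mul,
        zero_mul, one_mul, Finset.mul_sum, mul_ite, mul_zero]
      by_cases h : i = a
      · simp only [h, Ne.symm, eq_comm, if_true]
        simp [h, Ne.symm, eq_comm, Finset.sum_ite_eq, Finset.sum_ite_eq']
        have key : ∀ x : Fin n, (if a = x then (if a = x then Real.exp t * W x b else 0)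
            else (if a = x then W x b else 0)) = (if a = x then Real.exp t * W x b else 0) := by
          intro x; by_cases hx : a = x <;> simp [hx]
        rw [Finset.sum_congr rfl (fun x _ => key x)]
        simp [Finset.sum_ite_eq]
      · simp [h, Ne.symm, eq_comm, Finset.sum_ite_eq, Finset.sum_ite_eq']
    rw [hVeq] at h3
    rw [fderiv_mact F (Z t) (hz _ (hrank t)) _] at h3
    simpa using h3
  set g : ℝ → ℝ := fun t => Real.exp (-t) * F (Z t) with hg
  have hgd : ∀ t, HasDerivAt g 0 t := by
    intro t
    have he : HasDerivAt (fun s : ℝ => Real.exp (-s)) (-Real.exp (-t)) t := by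
      simpa using (hasDerivAt_neg t).exp
    have := he.mul (hderiv t)
    show HasDerivAt (fun t => Real.exp (-t) * F (Z t)) 0 t
    have h0' : -Real.exp (-t) * F (Z t) + Real.exp (-t) * F (Z t) = 0 := by ring
    rw [h0'] at this
    exact this
  have hconst := is_const_of_deriv_eq_zero (fun t => (hgd t).differentiableAt)
    (fun t => (hgd t).deriv) (Real.log d) 0
  have h0 : Z 0 = W := by
    funext a b; simp [hZ]
  rw [hg] at hconst
  simp only [h0, neg_zero, Real.exp_zero, one_mul, Real.exp_neg, Real.exp_log hd] at hconst
  have := hZt (Real.log d)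
  rw [Real.exp_log hd] at this
  rw [this] at hconst
  field_simp at hconst
  linarith [hconst]


lemma flip_inv (i j : Fin n) (hij : i ≠ j) (W : Fin n → Fin M → ℝ)
    (hW : (Matrix.of W).rank = n) :
    F (mact (Matrix.diagonal (fun p => if p = i ∨ p = j then (-1:ℝ) else 1)) W) = F W := by
  have hmatid : Matrix.transvection i j (-1) * Matrix.transvection j i 1 *
      Matrix.transvection i j (-1) * Matrix.transvection i j (-1) *
      Matrix.transvection j i 1 * Matrix.transvection i j (-1)
      = Matrix.diagonal (fun p => if p = i ∨ p = j then (-1:ℝ) else 1) := by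
    ext a b
    simp [Matrix.transvection, Matrix.mul_apply, Matrix.add_apply, Matrix.one_apply,
      Matrix.single, Matrix.diagonal, ite_and, add_mul, mul_add, ite_mul, mul_ite,
      zero_mul, mul_zero, one_mul, mul_one, Finset.sum_add_distrib, Finset.sum_ite_eq,
      Finset.sum_ite_eq', hij, hij.symm]
    by_cases ha : a = i <;> by_cases hb : b = i <;> by_cases ha' : a = j <;>
      by_cases hb' : b = j <;> simp_all <;> ring_nf <;> simp_all [eq_comm]
  have hrT : ∀ (a b : Fin n), a ≠ b → ∀ (c : ℝ) (W' : Fin n → Fin M → ℝ),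
      (Matrix.of W').rank = n → (Matrix.of (mact (Matrix.transvection a b c) W')).rank = n := by
    intro a b hab c W' hW'
    exact mact_rank _ (by rw [Matrix.det_transvection_of_ne a b hab]; exact isUnit_one) W' hW'
  set W1 := mact (Matrix.transvection i j (-1)) W with hW1
  set W2 := mact (Matrix.transvection j i 1) W1 with hW2
  set W3 := mact (Matrix.transvection i j (-1)) W2 with hW3
  set W4 := mact (Matrix.transvection i j (-1)) W3 with hW4
  set W5 := mact (Matrix.transvection j i 1) W4 with hW5
  have r1 := hrT i j hij (-1) W hW
  have r2 := hrT j i hij.symm 1 W1 r1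
  have r3 := hrT i j hij (-1) W2 r2
  have r4 := hrT i j hij (-1) W3 r3
  have r5 := hrT j i hij.symm 1 W4 r4
  have key : mact (Matrix.diagonal (fun p => if p = i ∨ p = j then (-1:ℝ) else 1)) W
      = mact (Matrix.transvection i j (-1)) W5 := by
    rw [hW5, hW4, hW3, hW2, hW1]
    rw [mact_mact, mact_mact, mact_mact, mact_mact, mact_mact, hmatid]
  rw [key, trans_inv F hF hz i j hij (-1) W5 r5, hW5,
    trans_inv F hF hz j i hij.symm 1 W4 r4, hW4,
    trans_inv F hF hz i j hij (-1) W3 r3, hW3,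
    trans_inv F hF hz i j hij (-1) W2 r2, hW2,
    trans_inv F hF hz j i hij.symm 1 W1 r1, hW1,
    trans_inv F hF hz i j hij (-1) W hW]

lemma sign_inv : ∀ (k : ℕ) (N : Finset (Fin n)), N.card = k → Even k →
    ∀ W : Fin n → Fin M → ℝ, (Matrix.of W).rank = n →
    F (mact (Matrix.diagonal (fun p => if p ∈ N then (-1:ℝ) else 1)) W) = F W := by
  intro k
  induction k using Nat.strong_induction_on with
  | _ k IH =>
    intro N hcard heven W hW
    rcases N.eq_empty_or_nonempty with rfl | ⟨i, hi⟩
    · simp [mact_one]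
    · have hkpos : 0 < k := by
        rw [← hcard]
        exact Finset.card_pos.mpr ⟨i, hi⟩
      have hk2 : 2 ≤ k := by
        rcases heven with ⟨m, hm⟩
        omega
      have hcarderase : (N.erase i).Nonempty := by
        rw [← Finset.card_pos, Finset.card_erase_of_mem hi, hcard]
        omega
      obtain ⟨j, hj⟩ := hcarderase
      have hji : j ≠ i := Finset.ne_of_mem_erase hj
      have hjN : j ∈ N := Finset.mem_of_mem_erase hj
      set N' := (N.erase i).erase j with hN'
      have hcard' : N'.card = k - 2 := by
        rw [hN', Finset.card_erase_of_mem hj, Finset.card_erase_of_mem hi, hcard]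
        omega
      have hsplit : Matrix.diagonal (fun p => if p ∈ N then (-1:ℝ) else 1)
          = Matrix.diagonal (fun p => if p = i ∨ p = j then (-1:ℝ) else 1)
            * Matrix.diagonal (fun p => if p ∈ N' then (-1:ℝ) else 1) := by
        rw [Matrix.diagonal_mul_diagonal]
        refine congrArg Matrix.diagonal (funext fun p => ?_)
        show _ = (if p = i ∨ p = j then (-1:ℝ) else 1) * (if p ∈ N' then (-1:ℝ) else 1)
        by_cases hpi : p = i
        · subst hpi
          simp [hi, hN', Finset.mem_erase, hji.symm]
        · by_cases hpj : p = j
          · subst hpj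
            simp [hjN, hN', Finset.mem_erase]
          · simp [hpi, hpj, hN', Finset.mem_erase]
      have hrank' : (Matrix.of (mact (Matrix.diagonal
          (fun p => if p ∈ N' then (-1:ℝ) else 1)) W)).rank = n := by
        refine mact_rank _ ?_ W hW
        rw [Matrix.det_diagonal]
        refine (Finset.prod_ne_zero_iff.mpr ?_).isUnit
        intro p _
        by_cases hp : p ∈ N' <;> simp [hp]
      rw [hsplit, ← mact_mact,
        flip_inv F hF hz i j (Ne.symm hji) _ hrank',
        IH (k - 2) (by omega) N' hcard' (by
          rcases heven with ⟨m, hm⟩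
          exact ⟨m - 1, by omega⟩) W hW]

lemma posdiag_inv : ∀ (s : Finset (Fin n)) (D : Fin n → ℝ), (∀ p, 0 < D p) →
    ∀ W : Fin n → Fin M → ℝ, (Matrix.of W).rank = n →
    F (mact (Matrix.diagonal (fun p => if p ∈ s then D p else 1)) W)
      = (∏ p ∈ s, D p) * F W := by
  intro s
  induction s using Finset.induction_on with
  | empty => intro D hD W hW; simp [mact_one]
  | insert _ _ hnotmem IH =>
    rename_i a s
    intro D hD W hW
    have hsplit : Matrix.diagonal (fun p => if p ∈ insert a s then D p else 1)
        = Matrix.diagonal (fun p => if p = a then D a else 1)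
          * Matrix.diagonal (fun p => if p ∈ s then D p else 1) := by
      rw [Matrix.diagonal_mul_diagonal]
      refine congrArg Matrix.diagonal (funext fun p => ?_)
      show _ = (if p = a then D a else 1) * (if p ∈ s then D p else 1)
      by_cases hpa : p = a
      · subst hpa; simp [hnotmem]
      · simp [hpa]
    have hrank' : (Matrix.of (mact (Matrix.diagonal
        (fun p => if p ∈ s then D p else 1)) W)).rank = n := by
      refine mact_rank _ ?_ W hW
      rw [Matrix.det_diagonal]
      refine (Finset.prod_ne_zero_iff.mpr ?_).isUnit
      intro p _
      by_cases hp : p ∈ s <;> simp [hp, (hD p).ne']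
    rw [hsplit, ← mact_mact, scale_inv F hF hz a (D a) (hD a) _ hrank',
      IH D hD W hW, Finset.prod_insert hnotmem]
    ring


lemma diag_inv (D : Fin n → ℝ) (hD : 0 < (Matrix.diagonal D).det)
    (W : Fin n → Fin M → ℝ) (hW : (Matrix.of W).rank = n) :
    F (mact (Matrix.diagonal D) W) = (Matrix.diagonal D).det * F W := by
  rw [Matrix.det_diagonal] at hD ⊢
  have hne : ∀ p, D p ≠ 0 := by
    intro p
    have h := hD.ne'
    rw [Finset.prod_ne_zero_iff] at h
    exact h p (Finset.mem_univ p)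
  set N := Finset.univ.filter (fun p => D p < 0) with hN
  have habs : ∀ p, (if p ∈ N then (-1:ℝ) else 1) * |D p| = D p := by
    intro p
    by_cases hp : D p < 0
    · simp [hN, hp, abs_of_neg hp]
    · simp [hN, hp, abs_of_nonneg (le_of_not_gt hp)]
  have hsplit : Matrix.diagonal D = Matrix.diagonal (fun p => if p ∈ N then (-1:ℝ) else 1)
      * Matrix.diagonal (fun p => if p ∈ (Finset.univ : Finset (Fin n)) then |D p| else 1) := by
    rw [Matrix.diagonal_mul_diagonal]
    refine congrArg Matrix.diagonal (funext fun p => ?_)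
    show D p = (if p ∈ N then (-1:ℝ) else 1)
      * (if p ∈ (Finset.univ : Finset (Fin n)) then |D p| else 1)
    simp only [Finset.mem_univ, if_true]
    exact (habs p).symm
  have hprodsign : ∏ p : Fin n, (if p ∈ N then (-1:ℝ) else 1) = (-1)^N.card := by
    rw [Finset.prod_ite_mem, Finset.univ_inter, Finset.prod_const]
  have hfactor : ∏ p, D p = (-1)^N.card * ∏ p, |D p| := by
    rw [← hprodsign, ← Finset.prod_mul_distrib]
    exact (Finset.prod_congr rfl (fun p _ => (habs p).symm))
  have habspos : 0 < ∏ p : Fin n, |D p| :=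
    Finset.prod_pos (fun p _ => abs_pos.mpr (hne p))
  have heven : Even N.card := by
    rcases Nat.even_or_odd N.card with h | h
    · exact h
    · exfalso
      rw [h.neg_one_pow] at hfactor
      nlinarith
  have hrank' : (Matrix.of (mact (Matrix.diagonal
      (fun p => if p ∈ (Finset.univ : Finset (Fin n)) then |D p| else 1)) W)).rank = n := by
    refine mact_rank _ ?_ W hW
    rw [Matrix.det_diagonal]
    refine (Finset.prod_ne_zero_iff.mpr ?_).isUnit
    intro p _
    simp [abs_ne_zero.mpr (hne p)]
  rw [hsplit, ← mact_mact, sign_inv F hF hz N.card N rfl heven _ hrank',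
    posdiag_inv F hF hz Finset.univ (fun p => |D p|)
      (fun p => abs_pos.mpr (hne p)) W hW]
  congr 1
  rw [hfactor, heven.neg_one_pow, one_mul]

lemma listtrans_inv : ∀ (L : List (Matrix.TransvectionStruct (Fin n) ℝ))
    (W : Fin n → Fin M → ℝ), (Matrix.of W).rank = n →
    F (mact (L.map Matrix.TransvectionStruct.toMatrix).prod W) = F W ∧
    (Matrix.of (mact (L.map Matrix.TransvectionStruct.toMatrix).prod W)).rank = n := by
  intro L
  induction L with
  | nil => intro W hW; constructor <;> simp [mact_one, hW]
  | cons t L IH =>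
    intro W hW
    obtain ⟨ih1, ih2⟩ := IH W hW
    rcases t with ⟨ti, tj, htij, c⟩
    rw [List.map_cons, List.prod_cons, ← mact_mact, Matrix.TransvectionStruct.toMatrix_mk]
    constructor
    · rw [trans_inv F hF hz ti tj htij c _ ih2]
      exact ih1
    · exact mact_rank _
        (by rw [Matrix.det_transvection_of_ne ti tj htij]; exact isUnit_one) _ ih2

lemma backward (A : Matrix (Fin n) (Fin n) ℝ) (hA : 0 < A.det)
    (W : Fin n → Fin M → ℝ) (hW : (Matrix.of W).rank = n) :
    F (mact A W) = A.det * F W := by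
  have det_transprod : ∀ (L : List (Matrix.TransvectionStruct (Fin n) ℝ)),
      ((L.map Matrix.TransvectionStruct.toMatrix).prod).det = 1 := by
    intro L
    induction L with
    | nil => simp
    | cons t L IH =>
      rw [List.map_cons, List.prod_cons, Matrix.det_mul, Matrix.TransvectionStruct.det, IH,
        one_mul]
  obtain ⟨L, L', D, hdec⟩ := Matrix.Pivot.exists_list_transvec_mul_diagonal_mul_list_transvec A
  have hdetD : (Matrix.diagonal D).det = A.det := by
    rw [hdec, Matrix.det_mul, Matrix.det_mul, det_transprod, det_transprod, one_mul, mul_one]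
  obtain ⟨hq1, hq2⟩ := listtrans_inv F hF hz L' W hW
  have h2 := diag_inv F hF hz D (by rw [hdetD]; exact hA) _ hq2
  have hrD : (Matrix.of (mact (Matrix.diagonal D)
      (mact (L'.map Matrix.TransvectionStruct.toMatrix).prod W))).rank = n :=
    mact_rank _ (by rw [hdetD]; exact hA.ne'.isUnit) _ hq2
  obtain ⟨hp1, _⟩ := listtrans_inv F hF hz L _ hrD
  rw [hdec, ← mact_mact, ← mact_mact, hp1, h2, hq1, hdetD, ← hdec]

end main


/-- Euler–Zermelo: a smooth function `F` on the set of full-rank `n×M` real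
matrices (`n ≤ M`) is positively homogeneous, i.e. `F(Y·A) = det A · F(Y)` for all
`A ∈ GL_n⁺(ℝ)`, if and only if it satisfies the Zermelo conditions
`∑_K y_l^K ∂F/∂y_j^K = δ_l^j F`. -/
theorem positive_homogeneous_iff_zermelo
    (n M : ℕ) (hnM : n ≤ M) (F : (Fin n → Fin M → ℝ) → ℝ)
    (S : Set (Fin n → Fin M → ℝ))
    (hS : S = {Y | (Matrix.of Y).rank = n})
    (hF : ∀ Y ∈ S, ContDiffAt ℝ (⊤ : ℕ∞) F Y) :
    (∀ Y ∈ S, ∀ A : Matrix (Fin n) (Fin n) ℝ, 0 < A.det →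
        F (fun j K => ∑ p : Fin n, A j p * Y p K) = A.det * F Y) ↔
    (∀ Y ∈ S, ∀ j l : Fin n,
        ∑ K : Fin M, fderiv ℝ F Y (basisDir n M j K) * Y l K =
          (if l = j then F Y else 0)) := by
  subst hS
  constructor
  · -- homogeneity → Zermelo
    intro hom Y hY j l
    have hYr : (Matrix.of Y).rank = n := hY
    set D : Fin n → Fin M → ℝ := mact (Matrix.single j l 1) Y with hD
    have step1 : ∑ K : Fin M, fderiv ℝ F Y (basisDir n M j K) * Y l K
        = fderiv ℝ F Y D := by
      have hdecomp : D = ∑ K : Fin M, Y l K • basisDir n M j K := by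
        funext a b
        simp only [hD, mact, Matrix.single, Matrix.of_apply, ite_and, ite_mul, zero_mul,
          one_mul, Finset.sum_apply, Pi.smul_apply, basisDir, Pi.single_apply, ite_apply,
          smul_eq_mul, mul_ite, mul_zero, mul_one]
        by_cases h : j = a <;>
          simp [h, Ne.symm, eq_comm, Finset.sum_ite_eq, Finset.sum_ite_eq']
      rw [hdecomp, map_sum]
      refine Finset.sum_congr rfl fun K _ => ?_
      rw [map_smul]
      simp [mul_comm]
    have step2 : HasDerivAt (fun t : ℝ => F (Y + t • D)) (fderiv ℝ F Y D) 0 := by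
      have h1 : HasDerivAt (fun t : ℝ => Y + t • D) D 0 := by
        simpa using ((hasDerivAt_id (0:ℝ)).smul_const D).const_add Y
      have h2 : HasFDerivAt F (fderiv ℝ F Y) ((fun t : ℝ => Y + t • D) 0) := by
        simpa using ((hF Y hY).differentiableAt (by simp)).hasFDerivAt
      exact h2.comp_hasDerivAt 0 h1
    have hev : (fun t : ℝ => F (Y + t • D))
        =ᶠ[nhds (0:ℝ)] (fun t => (if l = j then 1 + t else 1) * F Y) := by
      filter_upwards [Ioo_mem_nhds (a := (-1:ℝ)) (b := 1) (by norm_num) (by norm_num)] with t ht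
      have hAt : Y + t • D = mact (1 + Matrix.single j l t) Y := by
        funext a b
        simp only [hD, mact, Matrix.add_apply, Matrix.one_apply, Matrix.single,
          Matrix.of_apply, ite_and, add_mul, ite_mul, zero_mul, one_mul,
          Finset.sum_add_distrib, Pi.add_apply, Pi.smul_apply, smul_eq_mul, Finset.mul_sum,
          mul_ite, mul_zero]
        by_cases h : j = a <;>
          simp [h, Ne.symm, eq_comm, Finset.sum_ite_eq, Finset.sum_ite_eq'] <;> ring
      have hdet : (1 + Matrix.single j l t).det = (if l = j then 1 + t else 1) := by
        by_cases h : l = j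
        · subst h
          have hdiag : (1 : Matrix (Fin n) (Fin n) ℝ) + Matrix.single l l t
              = Matrix.diagonal (fun p => if p = l then 1 + t else 1) := by
            ext a b
            by_cases ha : a = b
            · subst ha
              by_cases hal : a = l <;>
                simp [Matrix.one_apply, Matrix.single, Matrix.diagonal_apply, hal,
                  Ne.symm, eq_comm]
            · have hno : ¬(l = a ∧ l = b) := fun hu => ha (hu.1.symm.trans hu.2)
              simp [Matrix.one_apply, Matrix.single, Matrix.diagonal_apply, ha, hno]
          rw [hdiag, Matrix.det_diagonal, if_pos rfl]
          simp [Finset.prod_ite_eq, Finset.prod_ite_eq']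
        · have : (1 : Matrix (Fin n) (Fin n) ℝ) + Matrix.single j l t
              = Matrix.transvection j l t := rfl
          rw [this, Matrix.det_transvection_of_ne j l (fun hh => h hh.symm), if_neg h]
      have hpos : 0 < (1 + Matrix.single j l t).det := by
        rw [hdet]
        by_cases h : l = j <;> simp [h]
        linarith [ht.1]
      have := hom Y hY _ hpos
      rw [hAt]
      rw [hdet] at this
      exact this
    have h4 : HasDerivAt (fun t : ℝ => (if l = j then 1 + t else 1) * F Y)
        (if l = j then F Y else 0) 0 := by
      by_cases h : l = j <;> simp only [h, if_true, if_false]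
      · simpa using (((hasDerivAt_id (0:ℝ)).const_add 1).mul_const (F Y))
      · simp [hasDerivAt_const]
    have h5 := h4.congr_of_eventuallyEq hev
    rw [step1]
    exact step2.unique h5
  · -- Zermelo → homogeneity
    intro hzS Y hY A hA
    have hF' : ∀ Z : Fin n → Fin M → ℝ, (Matrix.of Z).rank = n → ContDiffAt ℝ (⊤ : ℕ∞) F Z :=
      fun Z hZ => hF Z hZ
    have hz' : ∀ Z : Fin n → Fin M → ℝ, (Matrix.of Z).rank = n → ∀ j l : Fin n,
        ∑ K : Fin M, fderiv ℝ F Z (basisDir n M j K) * Z l K = (if l = j then F Z else 0) :=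
      fun Z hZ => hzS Z hZ
    exact backward F hF' hz' A hA Y hY
end

section
/- Suppose A_{K_1…K_n}(y, ẏ) are skew-symmetric in K_1,…,K_n and satisfy the Lepage condition ∑ (∂A_{K_1…K_n}/∂ẏ_s^P) ẏ_{j_1}^{K_1}⋯ẏ_{j_n}^{K_n} ε^{j_1…j_n} = 0 for all P, s. Then the function 𝓛 = (1/n!) A_{K_1…K_n} ẏ_{j_1}^{K_1}⋯ẏ_{j_n}^{K_n} ε^{j_1…j_n} satisfies ∑_K ẏ_j^K ∂𝓛/∂ẏ_j^K = n·𝓛 and more precisely ∑_K ẏ_k^K ∂𝓛/∂ẏ_j^K = δ_k^j 𝓛 for all j, k. -/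
/-- The Levi-Civita permutation symbol on `n` indices. -/
noncomputable def eps {n : ℕ} (f : Fin n → Fin n) : ℝ :=
  if h : Function.Bijective f then ((Equiv.Perm.sign (Equiv.ofBijective f h) : ℤ) : ℝ) else 0

open Finset Function

section
variable {ι κ : Type*} [Fintype ι] [DecidableEq ι]

def IsSkewSymmetric (c : (ι → κ) → ℝ) : Prop :=
  ∀ (K : ι → κ) (σ : Equiv.Perm ι), c (K ∘ σ) = ((Equiv.Perm.sign σ : ℤ) : ℝ) * c K

variable [Fintype κ]

/-- `contractRows c w = c_{K₁…Kₙ} w_1^{K₁}⋯w_n^{Kₙ}`, summed over `K`. -/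
def contractRows (c : (ι → κ) → ℝ) (w : ι → κ → ℝ) : ℝ :=
  ∑ K : ι → κ, c K * ∏ s, w s (K s)

theorem contractRows_comp_perm {c : (ι → κ) → ℝ} (hc : IsSkewSymmetric c) (w : ι → κ → ℝ)
    (σ : Equiv.Perm ι) :
    contractRows c (w ∘ σ) = ((Equiv.Perm.sign σ : ℤ) : ℝ) * contractRows c w := by
  rw [contractRows, contractRows, mul_sum,
    ← (Equiv.arrowCongr σ.symm (Equiv.refl κ)).sum_comp]
  refine sum_congr rfl fun K _ => ?_
  change c (K ∘ σ) * ∏ s, w (σ s) (K (σ s)) = _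
  rw [hc, Equiv.prod_comp σ (fun s => w s (K s)), mul_assoc]

theorem contractRows_eq_zero_of_row_eq {c : (ι → κ) → ℝ} (hc : IsSkewSymmetric c)
    {w : ι → κ → ℝ} {j k : ι} (hjk : j ≠ k) (hw : w j = w k) : contractRows c w = 0 := by
  have hswap : w ∘ Equiv.swap j k = w := by
    funext s
    rcases eq_or_ne s j with rfl | hsj
    · simp [hw]
    rcases eq_or_ne s k with rfl | hsk
    · simp [hw]
    · simp [Equiv.swap_apply_of_ne_of_ne hsj hsk]
  have := contractRows_comp_perm hc w (Equiv.swap j k)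
  rw [hswap, Equiv.Perm.sign_swap hjk] at this
  push_cast at this
  linarith

theorem contractRows_eq_zero_of_row_eq_zero (c : (ι → κ) → ℝ) {w : ι → κ → ℝ} {t : ι}
    (hw : w t = 0) : contractRows c w = 0 :=
  sum_eq_zero fun K _ => by rw [prod_eq_zero (mem_univ t) (by simp [hw]), mul_zero]

theorem hasFDerivAt_contractRows {a : (ι → κ → ℝ) → (ι → κ) → ℝ} {v : ι → κ → ℝ}
    (ha : ∀ K, DifferentiableAt ℝ (a · K) v) :
    HasFDerivAt (fun u => contractRows (a u) u)
      (∑ K : ι → κ, (a v K • ((ContinuousMultilinearMap.mkPiAlgebra ℝ ι ℝ).compContinuousLinearMap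
          (fun s => ContinuousLinearMap.proj (K s))).linearDeriv v
        + (∏ s, v s (K s)) • fderiv ℝ (a · K) v)) v := by
  refine HasFDerivAt.fun_sum fun K _ => (ha K).hasFDerivAt.mul ?_
  exact ((ContinuousMultilinearMap.mkPiAlgebra ℝ ι ℝ).compContinuousLinearMap
    (fun s => ContinuousLinearMap.proj (K s))).hasFDerivAt v

theorem fderiv_contractRows_apply {a : (ι → κ → ℝ) → (ι → κ) → ℝ} {v : ι → κ → ℝ}
    (ha : ∀ K, DifferentiableAt ℝ (a · K) v) (w : ι → κ → ℝ) :
    fderiv ℝ (fun u => contractRows (a u) u) v w =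
      ∑ t, contractRows (a v) (update v t (w t)) +
        contractRows (fun K => fderiv ℝ (a · K) v w) v := by
  rw [(hasFDerivAt_contractRows ha).fderiv]
  simp only [_root_.sum_apply, _root_.add_apply, _root_.smul_apply,
    ContinuousMultilinearMap.linearDeriv_apply,
    ContinuousMultilinearMap.compContinuousLinearMap_apply,
    ContinuousMultilinearMap.mkPiAlgebra_apply, ContinuousLinearMap.proj_apply, smul_eq_mul,
    sum_add_distrib, contractRows, mul_sum]
  rw [sum_comm]
  congr 1
  exact sum_congr rfl fun K _ => mul_comm _ _

/-- Row `t ≠ j` of `Pi.single j (v k)` is zero, and replacing row `j` of `v` by row `k` produces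
two equal rows unless `k = j`. -/
theorem fderiv_contractRows_single {a : (ι → κ → ℝ) → (ι → κ) → ℝ} {v : ι → κ → ℝ}
    (ha : ∀ K, DifferentiableAt ℝ (a · K) v) (hskew : IsSkewSymmetric (a v))
    (hlepage : ∀ w, contractRows (fun K => fderiv ℝ (a · K) v w) v = 0) (j k : ι) :
    fderiv ℝ (fun u => contractRows (a u) u) v (Pi.single j (v k)) =
      if k = j then contractRows (a v) v else 0 := by
  rw [fderiv_contractRows_apply ha, hlepage, add_zero,
    Fintype.sum_eq_single j fun t htj =>
      contractRows_eq_zero_of_row_eq_zero _ (t := t) (by simp [htj]),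
    Pi.single_eq_same]
  split_ifs with hkj
  · rw [hkj, update_eq_self]
  · exact contractRows_eq_zero_of_row_eq hskew (Ne.symm hkj) (by simp [update_of_ne hkj])

theorem isSkewSymmetric_fderiv {a : (ι → κ → ℝ) → (ι → κ) → ℝ}
    (hskew : ∀ u, IsSkewSymmetric (a u)) {v : ι → κ → ℝ}
    (ha : ∀ K, DifferentiableAt ℝ (a · K) v) (w : ι → κ → ℝ) :
    IsSkewSymmetric fun K => fderiv ℝ (a · K) v w := by
  intro K σ
  simp only [hskew _ K σ]
  rw [((ha K).hasFDerivAt.const_mul _).fderiv, _root_.smul_apply, smul_eq_mul]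

end

theorem sum_mul_eps {n : ℕ} (f : (Fin n → Fin n) → ℝ) :
    ∑ jt, f jt * eps jt = ∑ σ : Equiv.Perm (Fin n), f σ * ((Equiv.Perm.sign σ : ℤ) : ℝ) := by
  symm
  refine Fintype.sum_of_injective (fun σ : Equiv.Perm (Fin n) => ⇑σ) DFunLike.coe_injective _ _
    (fun jt hjt => ?_) (fun σ => ?_)
  · have : ¬ Bijective jt := fun hb => hjt ⟨Equiv.ofBijective jt hb, rfl⟩
    rw [eps, dif_neg this, mul_zero]
  · rw [eps, dif_pos σ.bijective,
      show Equiv.ofBijective σ σ.bijective = σ from Equiv.ext fun _ => rfl]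

theorem sum_sum_mul_prod_mul_eps {n : ℕ} {κ : Type*} [Fintype κ] {c : (Fin n → κ) → ℝ}
    (hc : IsSkewSymmetric c) (w : Fin n → κ → ℝ) :
    ∑ K : Fin n → κ, ∑ jt : Fin n → Fin n, c K * (∏ s, w (jt s) (K s)) * eps jt =
      n.factorial * contractRows c w := by
  have hsign (σ : Equiv.Perm (Fin n)) :
      ((Equiv.Perm.sign σ : ℤ) : ℝ) * ((Equiv.Perm.sign σ : ℤ) : ℝ) = 1 := by
    rw [← Int.cast_mul, ← Units.val_mul, Int.units_mul_self, Units.val_one, Int.cast_one]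
  rw [sum_comm]
  calc ∑ jt : Fin n → Fin n, ∑ K : Fin n → κ, c K * (∏ s, w (jt s) (K s)) * eps jt
      = ∑ σ : Equiv.Perm (Fin n), contractRows c (w ∘ σ) * ((Equiv.Perm.sign σ : ℤ) : ℝ) := by
        simp only [← sum_mul]; rw [sum_mul_eps]; rfl
    _ = n.factorial * contractRows c w := by
        simp only [contractRows_comp_perm hc, mul_right_comm _ (contractRows c w), hsign,
          one_mul, sum_const, card_univ, Fintype.card_perm, Fintype.card_fin, nsmul_eq_mul]

theorem sum_smul_basisDir {n M : ℕ} (j : Fin n) (x : Fin M → ℝ) :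
    ∑ K, x K • basisDir n M j K = Pi.single j x := by
  ext i L
  by_cases hi : i = j
  · subst hi; simp [basisDir, Pi.single_apply]
  · simp [basisDir, hi]

theorem contractRows_fderiv_eq_zero_of_basisDir {n M : ℕ}
    {a : (Fin n → Fin M → ℝ) → (Fin n → Fin M) → ℝ} {v : Fin n → Fin M → ℝ}
    (hlepage : ∀ s P, contractRows (fun K => fderiv ℝ (a · K) v (basisDir n M s P)) v = 0)
    (w : Fin n → Fin M → ℝ) : contractRows (fun K => fderiv ℝ (a · K) v w) v = 0 := by
  have hw : w = ∑ s, ∑ P, w s P • basisDir n M s P := by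
    simp only [sum_smul_basisDir, Finset.univ_sum_single]
  simp only [contractRows] at hlepage ⊢
  rw [hw]
  simp only [map_sum, map_smul, smul_eq_mul, sum_mul]
  rw [sum_comm]
  refine sum_eq_zero fun s _ => ?_
  rw [sum_comm]
  refine sum_eq_zero fun P _ => ?_
  simp only [mul_assoc, ← mul_sum, hlepage, mul_zero]

/-- Corollary 5.2: if the skew-symmetric coefficients `A_{K₁…Kₙ}(y,ẏ)` satisfy
the Lepage condition `∑ (∂A_{K₁…Kₙ}/∂ẏ_s^P) ẏ_{j₁}^{K₁}⋯ẏ_{jₙ}^{Kₙ} ε^{j₁…jₙ} = 0`, then the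
Lagrange function `𝓛 = (1/n!) A_{K₁…Kₙ} ẏ_{j₁}^{K₁}⋯ẏ_{jₙ}^{Kₙ} ε^{j₁…jₙ}` satisfies
`∑_{j,K} ẏ_j^K ∂𝓛/∂ẏ_j^K = n·𝓛` and, more precisely, the Zermelo conditions
`∑_K ẏ_k^K ∂𝓛/∂ẏ_j^K = δ_k^j 𝓛`. -/
theorem lepage_condition_implies_zermelo
    (n M : ℕ)
    (A : (Fin M → ℝ) → (Fin n → Fin M → ℝ) → (Fin n → Fin M) → ℝ)
    (hA : ∀ (y : Fin M → ℝ) (Kt : Fin n → Fin M), Differentiable ℝ fun v => A y v Kt)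
    (hskew : ∀ (y : Fin M → ℝ) (v : Fin n → Fin M → ℝ)
      (Kt : Fin n → Fin M) (σ : Equiv.Perm (Fin n)),
      A y v (Kt ∘ σ) = ((Equiv.Perm.sign σ : ℤ) : ℝ) * A y v Kt)
    (L : (Fin M → ℝ) → (Fin n → Fin M → ℝ) → ℝ)
    (hL : ∀ y v, L y v =
      (n.factorial : ℝ)⁻¹ * ∑ Kt : Fin n → Fin M, ∑ jt : Fin n → Fin n,
        A y v Kt * (∏ s : Fin n, v (jt s) (Kt s)) * eps jt)
    (hLepage : ∀ (y : Fin M → ℝ) (v : Fin n → Fin M → ℝ) (P : Fin M) (s : Fin n),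
      ∑ Kt : Fin n → Fin M, ∑ jt : Fin n → Fin n,
        fderiv ℝ (fun w => A y w Kt) v (basisDir n M s P) *
          (∏ t : Fin n, v (jt t) (Kt t)) * eps jt = 0)
    (y : Fin M → ℝ) (v : Fin n → Fin M → ℝ) :
    (∑ j : Fin n, ∑ K : Fin M, v j K * fderiv ℝ (L y) v (basisDir n M j K) =
        (n : ℝ) * L y v) ∧
    (∀ j k : Fin n,
      ∑ K : Fin M, v k K * fderiv ℝ (L y) v (basisDir n M j K) =
        (if k = j then L y v else 0)) := by
  have hfact : (n.factorial : ℝ) ≠ 0 := Nat.cast_ne_zero.2 n.factorial_ne_zero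
  have hdiff (K : Fin n → Fin M) : DifferentiableAt ℝ (A y · K) v := hA y K v
  have hLy : L y = fun u => contractRows (A y u) u := funext fun u => by
    rw [hL, sum_sum_mul_prod_mul_eps (hskew y u), inv_mul_cancel_left₀ hfact]
  have hlepage : ∀ w, contractRows (fun K => fderiv ℝ (A y · K) v w) v = 0 :=
    contractRows_fderiv_eq_zero_of_basisDir fun s P => by
      have h := hLepage y v P s
      rw [sum_sum_mul_prod_mul_eps (isSkewSymmetric_fderiv (hskew y) hdiff _)] at h
      exact (mul_eq_zero.1 h).resolve_left hfact
  have zermelo (j k : Fin n) :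
      ∑ K, v k K * fderiv ℝ (L y) v (basisDir n M j K) = if k = j then L y v else 0 := by
    simp only [← smul_eq_mul, ← map_smul, ← map_sum, sum_smul_basisDir]
    rw [hLy, fderiv_contractRows_single hdiff (hskew y v) hlepage]
  refine ⟨?_, zermelo⟩
  simp only [zermelo, ↓reduceIte, sum_const, card_univ, Fintype.card_fin, nsmul_eq_mul]
end

section
/- Let u : U → ℝ be a C² solution of the minimal surface equation (1+u_y²)u_xx − 2 u_x u_y u_xy + (1+u_x²)u_yy = 0 on an open set U ⊆ ℝ², and let W = sqrt(1 + u_x² + u_y²). Then the 1-form ω₃ = (−u_y dx + u_x dy)/W is closed on U, i.e. ∂/∂x(u_x/W) + ∂/∂y(u_y/W) = 0. -/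
/-! Writing `p = u_x`, `q = u_y`, `W = √(1 + p² + q²)`, the quotient rule gives
`∂ₓ(p/W) + ∂_y(q/W) = ((1 + q²) pₓ - p q (qₓ + p_y) + (1 + p²) q_y) / W³`.
Since `qₓ = p_y` (symmetry of second derivatives), the numerator is the left-hand side of the
minimal surface equation. -/

/-- `∂u/∂x` on `ℝ²`. -/
noncomputable def ux (u : ℝ × ℝ → ℝ) (z : ℝ × ℝ) : ℝ := fderiv ℝ u z (1, 0)

/-- `∂u/∂y` on `ℝ²`. -/
noncomputable def uy (u : ℝ × ℝ → ℝ) (z : ℝ × ℝ) : ℝ := fderiv ℝ u z (0, 1)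

/-- `W = √(1 + u_x² + u_y²)`. -/
noncomputable def Wfun (u : ℝ × ℝ → ℝ) (z : ℝ × ℝ) : ℝ :=
  Real.sqrt (1 + ux u z ^ 2 + uy u z ^ 2)

section

variable {E F G : Type*} [NormedAddCommGroup E] [NormedSpace ℝ E]
  [NormedAddCommGroup F] [NormedSpace ℝ F] [NormedAddCommGroup G] [NormedSpace ℝ G]

theorem fderiv_clm_apply_const_apply {c : E → F →L[ℝ] G} {x : E}
    (hc : DifferentiableAt ℝ c x) (e : F) (v : E) :
    fderiv ℝ (fun y => c y e) x v = fderiv ℝ c x v e := by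
  simp [fderiv_clm_apply hc (differentiableAt_const e)]

theorem fderiv_div_sqrt_one_add_sq_add_sq_apply {p q : E → ℝ} {x : E}
    (hp : DifferentiableAt ℝ p x) (hq : DifferentiableAt ℝ q x) (v : E) :
    fderiv ℝ (fun y => p y / √(1 + p y ^ 2 + q y ^ 2)) x v =
      ((1 + q x ^ 2) * fderiv ℝ p x v - p x * q x * fderiv ℝ q x v) /
        √(1 + p x ^ 2 + q x ^ 2) ^ 3 := by
  have hpos : 0 < 1 + p x ^ 2 + q x ^ 2 := by positivity
  have hWpos : 0 < √(1 + p x ^ 2 + q x ^ 2) := Real.sqrt_pos.2 hpos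
  have hW := (((hasFDerivAt_const (1 : ℝ) x).fun_add (hp.hasFDerivAt.pow 2)).fun_add
    (hq.hasFDerivAt.pow 2)).sqrt hpos.ne'
  have hquot : HasFDerivAt (fun y => p y / √(1 + p y ^ 2 + q y ^ 2)) _ x :=
    hp.hasFDerivAt.fun_mul ((hasDerivAt_inv hWpos.ne').comp_hasFDerivAt x hW)
  rw [hquot.fderiv]
  simp only [one_div, mul_inv_rev, Nat.add_one_sub_one, pow_one, nsmul_eq_mul, Nat.cast_ofNat,
    zero_add, smul_add, neg_smul, smul_neg, add_apply, neg_apply, smul_apply, smul_eq_mul]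
  field_simp
  rw [Real.sq_sqrt hpos.le]
  ring

end

/-- if `u` is a C² solution of the minimal surface equation on an open set `U`,
then the Noether current `ω₃ = (−u_y dx + u_x dy)/W` is closed, i.e.
`∂/∂x (u_x/W) + ∂/∂y (u_y/W) = 0` on `U`. -/
theorem minimal_surface_equation_implies_third_current_closed
    (U : Set (ℝ × ℝ)) (hU : IsOpen U) (u : ℝ × ℝ → ℝ) (hu : ContDiffOn ℝ 2 u U)
    (hMSE : ∀ z ∈ U,
      (1 + uy u z ^ 2) * fderiv ℝ (ux u) z (1, 0)
        - 2 * ux u z * uy u z * fderiv ℝ (ux u) z (0, 1)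
        + (1 + ux u z ^ 2) * fderiv ℝ (uy u) z (0, 1) = 0) :
    ∀ z ∈ U,
      fderiv ℝ (fun w => ux u w / Wfun u w) z (1, 0)
        + fderiv ℝ (fun w => uy u w / Wfun u w) z (0, 1) = 0 := by
  intro z hz
  have hu2 : ContDiffAt ℝ 2 u z := (hu z hz).contDiffAt (hU.mem_nhds hz)
  have hDu : DifferentiableAt ℝ (fderiv ℝ u) z :=
    (hu2.fderiv_right (m := 1) le_rfl).differentiableAt one_ne_zero
  have hux : DifferentiableAt ℝ (ux u) z := hDu.clm_apply (differentiableAt_const _)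
  have huy : DifferentiableAt ℝ (uy u) z := hDu.clm_apply (differentiableAt_const _)
  have hmixed : fderiv ℝ (uy u) z (1, 0) = fderiv ℝ (ux u) z (0, 1) := by
    unfold ux uy
    rw [fderiv_clm_apply_const_apply hDu, fderiv_clm_apply_const_apply hDu]
    exact hu2.isSymmSndFDerivAt (by simp) _ _
  have hx : fderiv ℝ (fun w => ux u w / Wfun u w) z (1, 0) =
      ((1 + uy u z ^ 2) * fderiv ℝ (ux u) z (1, 0)
        - ux u z * uy u z * fderiv ℝ (uy u) z (1, 0)) / Wfun u z ^ 3 :=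
    fderiv_div_sqrt_one_add_sq_add_sq_apply hux huy _
  have hy : fderiv ℝ (fun w => uy u w / Wfun u w) z (0, 1) =
      ((1 + ux u z ^ 2) * fderiv ℝ (uy u) z (0, 1)
        - uy u z * ux u z * fderiv ℝ (ux u) z (0, 1)) / Wfun u z ^ 3 := by
    simp only [Wfun, add_right_comm (1 : ℝ) (ux u _ ^ 2)]
    exact fderiv_div_sqrt_one_add_sq_add_sq_apply huy hux _
  rw [hx, hy, hmixed]
  linear_combination hMSE z hz / Wfun u z ^ 3
end

section
/- Let u : U → ℝ be a C² solution of the minimal surface equation (1+u_y²)u_xx − 2 u_x u_y u_xy + (1+u_x²)u_yy = 0, and W = sqrt(1+u_x²+u_y²). Then the 1-form ω₁ = (u_x u_y dx + (1+u_y²) dy)/W is closed: ∂/∂y(u_x u_y / W) = ∂/∂x((1+u_y²)/W). -/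
/-! Writing `p = u_x`, `q = u_y`, `W² = 1 + p² + q²`, the quotient rule puts both sides of the
claimed identity over the common denominator `W³`. Once the mixed partials `u_xy = u_yx` are
identified, the two numerators differ by exactly `p` times the minimal surface operator
`(1 + q²) u_xx - 2 p q u_xy + (1 + p²) u_yy`, which vanishes. -/

section SecondDerivative

variable {𝕜 E F : Type*} [RCLike 𝕜] [NormedAddCommGroup E] [NormedSpace 𝕜 E]
  [NormedAddCommGroup F] [NormedSpace 𝕜 F] {u : E → F} {z : E}

theorem ContDiffAt.hasFDerivAt_fderiv_apply (hu : ContDiffAt 𝕜 2 u z) (v : E) :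
    HasFDerivAt (fun y => fderiv 𝕜 u y v) ((fderiv 𝕜 (fderiv 𝕜 u) z).flip v) z := by
  have hu' : DifferentiableAt 𝕜 (fderiv 𝕜 u) z :=
    (hu.fderiv_right (m := 1) (by norm_num)).differentiableAt (by norm_num)
  simpa using hu'.hasFDerivAt.clm_apply (hasFDerivAt_const v z)

theorem ContDiffAt.fderiv_fderiv_apply_comm (hu : ContDiffAt 𝕜 2 u z) (v w : E) :
    fderiv 𝕜 (fun y => fderiv 𝕜 u y v) z w = fderiv 𝕜 (fun y => fderiv 𝕜 u y w) z v := by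
  rw [(hu.hasFDerivAt_fderiv_apply v).fderiv, (hu.hasFDerivAt_fderiv_apply w).fderiv]
  exact hu.isSymmSndFDerivAt (by simp) w v

end SecondDerivative

theorem HasFDerivAt.div {𝕜 E : Type*} [NontriviallyNormedField 𝕜] [NormedAddCommGroup E]
    [NormedSpace 𝕜 E] {c d : E → 𝕜} {c' d' : E →L[𝕜] 𝕜} {x : E}
    (hc : HasFDerivAt c c' x) (hd : HasFDerivAt d d' x) (hx : d x ≠ 0) :
    HasFDerivAt (fun y => c y / d y) ((d x ^ 2)⁻¹ • (d x • c' - c x • d')) x := by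
  have hinv : HasFDerivAt (fun y => (d y)⁻¹) (-(d x ^ 2)⁻¹ • d') x :=
    (hasDerivAt_inv hx).comp_hasFDerivAt x hd
  simp only [div_eq_mul_inv]
  refine (hc.fun_mul hinv).congr_fderiv ?_
  ext v
  simp only [add_apply, smul_apply, sub_apply, smul_eq_mul]
  field_simp
  ring

theorem HasFDerivAt.fderiv_div_sqrt_apply {E : Type*} [NormedAddCommGroup E] [NormedSpace ℝ E]
    {f g : E → ℝ} {f' g' : E →L[ℝ] ℝ} {z : E}
    (hf : HasFDerivAt f f' z) (hg : HasFDerivAt g g' z) (hpos : 0 < g z) (v : E) :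
    fderiv ℝ (fun w => f w / √(g w)) z v = (f' v * g z - f z * g' v / 2) / √(g z) ^ 3 := by
  have hW : √(g z) ≠ 0 := (Real.sqrt_pos.mpr hpos).ne'
  rw [(hf.div (hg.sqrt hpos.ne') hW).fderiv]
  simp only [smul_apply, sub_apply, smul_eq_mul]
  field_simp
  rw [Real.sq_sqrt hpos.le]
  ring

/-- if `u` is a C² solution of the minimal surface equation on an open set `U`,
then the Noether current `ω₁ = (u_x u_y dx + (1+u_y²) dy)/W` is closed:
`∂/∂y (u_x u_y/W) = ∂/∂x ((1+u_y²)/W)` on `U`. -/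
theorem minimal_surface_equation_implies_first_current_closed
    (U : Set (ℝ × ℝ)) (hU : IsOpen U) (u : ℝ × ℝ → ℝ) (hu : ContDiffOn ℝ 2 u U)
    (hMSE : ∀ z ∈ U,
      (1 + uy u z ^ 2) * fderiv ℝ (ux u) z (1, 0)
        - 2 * ux u z * uy u z * fderiv ℝ (ux u) z (0, 1)
        + (1 + ux u z ^ 2) * fderiv ℝ (uy u) z (0, 1) = 0) :
    ∀ z ∈ U,
      fderiv ℝ (fun w => ux u w * uy u w / Wfun u w) z (0, 1) =
        fderiv ℝ (fun w => (1 + uy u w ^ 2) / Wfun u w) z (1, 0) := by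
  intro z hz
  have hu2 : ContDiffAt ℝ 2 u z := hu.contDiffAt (hU.mem_nhds hz)
  have hp : HasFDerivAt (ux u) (fderiv ℝ (ux u) z) z :=
    (hu2.hasFDerivAt_fderiv_apply (1, 0)).differentiableAt.hasFDerivAt
  have hq : HasFDerivAt (uy u) (fderiv ℝ (uy u) z) z :=
    (hu2.hasFDerivAt_fderiv_apply (0, 1)).differentiableAt.hasFDerivAt
  have hmixed : fderiv ℝ (uy u) z (1, 0) = fderiv ℝ (ux u) z (0, 1) :=
    hu2.fderiv_fderiv_apply_comm (0, 1) (1, 0)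
  have hWsq := ((hp.pow 2).const_add 1).fun_add (hq.pow 2)
  have hpos : 0 < 1 + ux u z ^ 2 + uy u z ^ 2 := by positivity
  simp only [Wfun]
  rw [(hp.fun_mul hq).fderiv_div_sqrt_apply hWsq hpos,
    ((hq.pow 2).const_add 1).fderiv_div_sqrt_apply hWsq hpos]
  congr 1
  simp only [add_apply, smul_apply, smul_eq_mul, hmixed]
  linear_combination ux u z * hMSE z hz
end

section
/- For a C² function u on an open U ⊆ ℝ² with W = sqrt(1+u_x²+u_y²), the following are equivalent: (i) u satisfies the minimal surface equation (1+u_y²)u_xx − 2u_x u_y u_xy + (1+u_x²)u_yy = 0; (ii) the three 1-forms ω₁ = (u_x u_y dx + (1+u_y²)dy)/W, ω₂ = (−(1+u_x²)dx − u_x u_y dy)/W, ω₃ = (−u_y dx + u_x dy)/W are all closed on U. -/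
/-! With `p = u_x`, `q = u_y` and the symmetry `p_y = q_x` of second derivatives, the quotient
rule shows that the closedness defect `∂_y f - ∂_x g` of each current `f dx + g dy` is a multiple
of `M / W³`, where `M` is the minimal surface operator: the multipliers are `p`, `q` and `-1`.
So `M = 0` closes all three currents, and closedness of `ω₃` alone (the divergence form
`div (∇u / W) = 0` of the equation) gives back `M = 0` because `W > 0`. -/
theorem HasFDerivAt.div_sqrt_one_add_sq_add_sq {E : Type*} [NormedAddCommGroup E]
    [NormedSpace ℝ E] {N P Q : E → ℝ} {N' P' Q' : E →L[ℝ] ℝ} {z : E}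
    (hN : HasFDerivAt N N' z) (hP : HasFDerivAt P P' z) (hQ : HasFDerivAt Q Q' z) :
    HasFDerivAt (fun w => N w / √(1 + P w ^ 2 + Q w ^ 2))
      ((√(1 + P z ^ 2 + Q z ^ 2) ^ 3)⁻¹ •
        ((1 + P z ^ 2 + Q z ^ 2) • N' - N z • (P z • P' + Q z • Q'))) z := by
  have hpos : 0 < 1 + P z ^ 2 + Q z ^ 2 := by positivity
  have hW : HasFDerivAt (fun w => √(1 + P w ^ 2 + Q w ^ 2)) _ z :=
    (((hP.pow 2).const_add 1).add (hQ.pow 2)).sqrt hpos.ne'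
  have hWinv := (hasDerivAt_inv (Real.sqrt_pos.2 hpos).ne').comp_hasFDerivAt z hW
  refine (hN.mul hWinv).congr_fderiv ?_
  ext v
  have hsq := Real.sq_sqrt hpos.le
  have hne := (Real.sqrt_pos.2 hpos).ne'
  simp only [smul_apply, add_apply, sub_apply, smul_eq_mul, Pi.add_apply, Function.comp_apply,
    nsmul_eq_mul]
  field_simp
  rw [pow_succ, hsq]
  ring

noncomputable def minimalSurfaceOperator (u : ℝ × ℝ → ℝ) (z : ℝ × ℝ) : ℝ :=
  (1 + uy u z ^ 2) * fderiv ℝ (ux u) z (1, 0)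
    - 2 * ux u z * uy u z * fderiv ℝ (ux u) z (0, 1)
    + (1 + ux u z ^ 2) * fderiv ℝ (uy u) z (0, 1)

section

variable {u : ℝ × ℝ → ℝ} {z : ℝ × ℝ}

theorem differentiableAt_fderiv_of_contDiffAt_two (hu : ContDiffAt ℝ 2 u z) :
    DifferentiableAt ℝ (fderiv ℝ u) z :=
  (hu.fderiv_right (m := 1) (by norm_num)).differentiableAt one_ne_zero

theorem hasFDerivAt_ux (hu : ContDiffAt ℝ 2 u z) : HasFDerivAt (ux u) (fderiv ℝ (ux u) z) z :=
  ((differentiableAt_fderiv_of_contDiffAt_two hu).clm_apply (differentiableAt_const _)).hasFDerivAt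

theorem hasFDerivAt_uy (hu : ContDiffAt ℝ 2 u z) : HasFDerivAt (uy u) (fderiv ℝ (uy u) z) z :=
  ((differentiableAt_fderiv_of_contDiffAt_two hu).clm_apply (differentiableAt_const _)).hasFDerivAt

theorem fderiv_uy_apply_one_zero (hu : ContDiffAt ℝ 2 u z) :
    fderiv ℝ (uy u) z (1, 0) = fderiv ℝ (ux u) z (0, 1) := by
  have hd := differentiableAt_fderiv_of_contDiffAt_two hu
  have hsymm := hu.isSymmSndFDerivAt (by simp) (1, 0) (0, 1)
  change fderiv ℝ (fun w => fderiv ℝ u w (0, 1)) z (1, 0)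
    = fderiv ℝ (fun w => fderiv ℝ u w (1, 0)) z (0, 1)
  rw [fderiv_clm_apply hd (differentiableAt_const _), fderiv_clm_apply hd (differentiableAt_const _)]
  simpa using hsymm

theorem fderiv_div_Wfun_apply (hu : ContDiffAt ℝ 2 u z) {N : ℝ × ℝ → ℝ} {N' : ℝ × ℝ →L[ℝ] ℝ}
    (hN : HasFDerivAt N N' z) (v : ℝ × ℝ) :
    fderiv ℝ (fun w => N w / Wfun u w) z v =
      ((1 + ux u z ^ 2 + uy u z ^ 2) * N' v
        - N z * (ux u z * fderiv ℝ (ux u) z v + uy u z * fderiv ℝ (uy u) z v)) / Wfun u z ^ 3 := by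
  simp only [Wfun]
  rw [(hN.div_sqrt_one_add_sq_add_sq (hasFDerivAt_ux hu) (hasFDerivAt_uy hu)).fderiv]
  simp only [smul_apply, sub_apply, add_apply, smul_eq_mul]
  ring

theorem curl_noetherCurrent₁ (hu : ContDiffAt ℝ 2 u z) :
    fderiv ℝ (fun w => ux u w * uy u w / Wfun u w) z (0, 1)
      - fderiv ℝ (fun w => (1 + uy u w ^ 2) / Wfun u w) z (1, 0) =
      ux u z * minimalSurfaceOperator u z / Wfun u z ^ 3 := by
  have hp := hasFDerivAt_ux hu
  have hq := hasFDerivAt_uy hu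
  rw [fderiv_div_Wfun_apply hu (hp.fun_mul hq), fderiv_div_Wfun_apply hu ((hq.pow 2).const_add 1),
    ← sub_div]
  simp only [smul_apply, add_apply, smul_eq_mul, fderiv_uy_apply_one_zero hu,
    minimalSurfaceOperator]
  ring

theorem curl_noetherCurrent₂ (hu : ContDiffAt ℝ 2 u z) :
    fderiv ℝ (fun w => -(1 + ux u w ^ 2) / Wfun u w) z (0, 1)
      - fderiv ℝ (fun w => -(ux u w * uy u w) / Wfun u w) z (1, 0) =
      uy u z * minimalSurfaceOperator u z / Wfun u z ^ 3 := by
  have hp := hasFDerivAt_ux hu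
  have hq := hasFDerivAt_uy hu
  rw [fderiv_div_Wfun_apply hu ((hp.pow 2).const_add 1).fun_neg,
    fderiv_div_Wfun_apply hu (hp.fun_mul hq).fun_neg, ← sub_div]
  simp only [neg_apply, smul_apply, add_apply, smul_eq_mul, fderiv_uy_apply_one_zero hu,
    minimalSurfaceOperator]
  ring

theorem curl_noetherCurrent₃ (hu : ContDiffAt ℝ 2 u z) :
    fderiv ℝ (fun w => -(uy u w) / Wfun u w) z (0, 1)
      - fderiv ℝ (fun w => ux u w / Wfun u w) z (1, 0) =
      -minimalSurfaceOperator u z / Wfun u z ^ 3 := by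
  have hp := hasFDerivAt_ux hu
  have hq := hasFDerivAt_uy hu
  rw [fderiv_div_Wfun_apply hu hq.fun_neg, fderiv_div_Wfun_apply hu hp, ← sub_div]
  simp only [neg_apply, fderiv_uy_apply_one_zero hu, minimalSurfaceOperator]
  ring

end

theorem Wfun_pos (u : ℝ × ℝ → ℝ) (z : ℝ × ℝ) : 0 < Wfun u z :=
  Real.sqrt_pos.2 (by positivity)

/-- for a C² function `u` on an open `U ⊆ ℝ²`, the minimal surface equation
holds on `U` if and only if the three Noether-current 1-forms
`ω₁ = (u_x u_y dx + (1+u_y²) dy)/W`, `ω₂ = (−(1+u_x²) dx − u_x u_y dy)/W`,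
`ω₃ = (−u_y dx + u_x dy)/W` are all closed on `U`. -/
theorem minimal_surface_equation_iff_noether_currents_closed
    (U : Set (ℝ × ℝ)) (hU : IsOpen U) (u : ℝ × ℝ → ℝ) (hu : ContDiffOn ℝ 2 u U) :
    (∀ z ∈ U,
      (1 + uy u z ^ 2) * fderiv ℝ (ux u) z (1, 0)
        - 2 * ux u z * uy u z * fderiv ℝ (ux u) z (0, 1)
        + (1 + ux u z ^ 2) * fderiv ℝ (uy u) z (0, 1) = 0) ↔
    (∀ z ∈ U,
      (fderiv ℝ (fun w => ux u w * uy u w / Wfun u w) z (0, 1) =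
        fderiv ℝ (fun w => (1 + uy u w ^ 2) / Wfun u w) z (1, 0)) ∧
      (fderiv ℝ (fun w => -(1 + ux u w ^ 2) / Wfun u w) z (0, 1) =
        fderiv ℝ (fun w => -(ux u w * uy u w) / Wfun u w) z (1, 0)) ∧
      (fderiv ℝ (fun w => -(uy u w) / Wfun u w) z (0, 1) =
        fderiv ℝ (fun w => ux u w / Wfun u w) z (1, 0))) := by
  have hu₂ : ∀ z ∈ U, ContDiffAt ℝ 2 u z := fun z hz => hu.contDiffAt (hU.mem_nhds hz)
  refine forall₂_congr fun z hz => ?_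
  change minimalSurfaceOperator u z = 0 ↔ _
  simp only [← sub_eq_zero (b := fderiv ℝ _ z (1, 0)), curl_noetherCurrent₁ (hu₂ z hz),
    curl_noetherCurrent₂ (hu₂ z hz), curl_noetherCurrent₃ (hu₂ z hz)]
  have hW : Wfun u z ^ 3 ≠ 0 := pow_ne_zero 3 (Wfun_pos u z).ne'
  constructor
  · intro hM
    simp [hM]
  · rintro ⟨-, -, h₃⟩
    simpa [hW] using h₃
end

section
/- Let B_{K_1…K_k i_{k+1}…i_q} (for 0 ≤ k ≤ q) be families of coefficients, each skew-symmetric in K_1,…,K_k and in i_{k+1},…,i_q, related to families A_{K_1…K_k i_{k+1}…i_q} by B_{K_1…K_k i_{k+1}…i_q} = ∑_{l=k}^{q} C(q−k, q−l) · A_{K_1…K_l i_{l+1}…i_q} · y_{i_{k+1}}^{K_{k+1}} ⋯ y_{i_l}^{K_l}, alternated over i_{k+1},…,i_q. Then this triangular system inverts to A_{K_1…K_k i_{k+1}…i_q} = ∑_{l=k}^{q} (−1)^{l−k} C(q−k, q−l) · B_{K_1…K_l i_{l+1}…i_q} · y_{i_{k+1}}^{K_{k+1}} ⋯ y_{i_l}^{K_l},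 alternated over i_{k+1},…,i_q. -/
open Finset

/-!
Write `S_{k,l}` for the normalised operation `F ↦ (1/(q-k)!) Alt_{i_{k+1},…,i_q} (F · y ⋯ y)`
with the velocities contracted against the `K`-slots `k+1, …, l`, so that the hypothesis reads
`B_k = ∑_l C(q-k, q-l) S_{k,l} A_l`. Contracting on slots below `l` commutes with alternating
over slots from `l` on, and alternating twice over nested groups of slots only multiplies by the
order `(q-l)!` of the smaller permutation group; hence `S_{k,l} ∘ S_{l,m} = S_{k,m}`, and
`S_{k,k} A_k = A_k` by skew-symmetry. The inversion is then that of the upper triangular matrix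
`C(q-k, q-l)`, whose inverse is `(-1)^(l-k) C(q-k, q-l)` since
`C(q-k, q-l) C(q-l, q-m) = C(q-k, q-m) C(m-k, m-l)` and alternating binomial sums vanish.
-/

theorem sum_Icc_neg_one_pow_mul_choose_mul_choose {q k m : ℕ} (hkm : k ≤ m) (hmq : m ≤ q) :
    ∑ l ∈ Icc k m, (-1 : ℤ) ^ (l - k) * ((q - k).choose (q - l) * (q - l).choose (q - m))
      = if m = k then 1 else 0 := by
  calc _ = ∑ j ∈ range (m - k + 1),
        ((q - k).choose (q - m) : ℤ) * ((-1) ^ j * (m - k).choose j) := by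
        rw [← Ico_add_one_right_eq_Icc, sum_Ico_eq_sum_range, Nat.sub_add_comm hkm]
        refine sum_congr rfl fun j hj => ?_
        rw [mem_range] at hj
        have h : ((q - k).choose (q - (k + j)) * (q - (k + j)).choose (q - m) : ℤ)
            = (q - k).choose (q - m) * (m - k).choose j := by
          norm_cast
          rw [Nat.choose_mul (by omega), show q - k - (q - m) = m - k by omega,
            show q - (k + j) - (q - m) = m - k - j by omega, Nat.choose_symm (by omega)]
        rw [Nat.add_sub_cancel_left]
        linear_combination (-1 : ℤ) ^ j * h
    _ = if m = k then 1 else 0 := by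
        rw [← mul_sum, Int.alternating_sum_range_choose]
        rcases hkm.eq_or_lt with rfl | hlt
        · simp
        · simp [hlt.ne', Nat.sub_ne_zero_of_lt hlt]

theorem eq_sum_Icc_smul_of_eq_sum_Icc_smul {R V : Type*} [Semiring R] [AddCommMonoid V]
    [Module R V] {q : ℕ} (S : ℕ → ℕ → V →ₗ[R] V)
    (hS : ∀ k l m, k ≤ l → l ≤ m → m ≤ q → S k l ∘ₗ S l m = S k m) (c d : ℕ → ℕ → R)
    (hdc : ∀ k m, k ≤ m → m ≤ q → ∑ l ∈ Icc k m, d k l * c l m = if m = k then 1 else 0)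
    (A B : ℕ → V) (hA : ∀ k ≤ q, S k k (A k) = A k)
    (hB : ∀ k ≤ q, B k = ∑ l ∈ Icc k q, c k l • S k l (A l)) :
    ∀ k ≤ q, A k = ∑ l ∈ Icc k q, d k l • S k l (B l) := by
  intro k hk
  symm
  calc ∑ l ∈ Icc k q, d k l • S k l (B l)
      = ∑ l ∈ Icc k q, ∑ m ∈ Icc l q, (d k l * c l m) • S k m (A m) := by
        refine sum_congr rfl fun l hl => ?_
        rw [mem_Icc] at hl
        rw [hB l hl.2, map_sum, smul_sum]
        refine sum_congr rfl fun m hm => ?_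
        rw [mem_Icc] at hm
        rw [map_smul, ← LinearMap.comp_apply, hS k l m hl.1 hm.1 hm.2, mul_smul]
    _ = ∑ m ∈ Icc k q, (∑ l ∈ Icc k m, d k l * c l m) • S k m (A m) := by
        simp_rw [sum_smul]
        exact sum_comm' fun l m => by simp only [mem_Icc]; omega
    _ = A k := by
        rw [sum_eq_single_of_mem k (by simp [hk]), hdc k k le_rfl hk, if_pos rfl, one_smul,
          hA k hk]
        intro m hm hmk
        rw [mem_Icc] at hm
        rw [hdc k m hm.1 hm.2, if_neg hmk, zero_smul]

namespace ContactCoefficients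

/-- Slots count from `0`; a family of order `k` reads `K` below slot `k` and `i` from it on. -/
abbrev Family (q : ℕ) (κ ι R : Type*) := (Fin q → κ) → (Fin q → ι) → R

variable {R ι κ : Type*} {q : ℕ}

def fixingBelow (q k : ℕ) : Finset (Equiv.Perm (Fin q)) :=
  univ.filter fun σ => ∀ t : Fin q, (t : ℕ) < k → σ t = t

def agreeOutside [Fintype κ] [DecidableEq κ] (k l : ℕ) (K : Fin q → κ) : Finset (Fin q → κ) :=
  univ.filter fun K' => ∀ t : Fin q, ((t : ℕ) < k ∨ l ≤ (t : ℕ)) → K' t = K t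

def slots (q k l : ℕ) : Finset (Fin q) :=
  univ.filter fun t => k ≤ (t : ℕ) ∧ (t : ℕ) < l

theorem mem_fixingBelow {k : ℕ} {σ : Equiv.Perm (Fin q)} :
    σ ∈ fixingBelow q k ↔ ∀ t : Fin q, (t : ℕ) < k → σ t = t := by
  simp [fixingBelow]

theorem fixingBelow_mono {k l : ℕ} (hkl : k ≤ l) : fixingBelow q l ⊆ fixingBelow q k := by
  intro σ hσ
  rw [mem_fixingBelow] at hσ ⊢
  exact fun t ht => hσ t (by omega)

theorem mul_mem_fixingBelow_iff {k : ℕ} {σ τ : Equiv.Perm (Fin q)} (hτ : τ ∈ fixingBelow q k) :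
    σ * τ ∈ fixingBelow q k ↔ σ ∈ fixingBelow q k := by
  rw [mem_fixingBelow] at hτ
  simp only [mem_fixingBelow, Equiv.Perm.mul_apply]
  exact forall₂_congr fun t ht => by rw [hτ t ht]

theorem card_fixingBelow {k : ℕ} (hk : k ≤ q) : #(fixingBelow q k) = (q - k).factorial := by
  have e : {t : Fin q // k ≤ (t : ℕ)} ≃ Fin (q - k) :=
    { toFun t := ⟨t.1 - k, by omega⟩
      invFun j := ⟨⟨k + j, by omega⟩, by simp⟩
      left_inv t := by ext; simp; omega
      right_inv j := by ext; simp }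
  rw [fixingBelow, ← Fintype.card_subtype, ← Fintype.card_fin (q - k), ← Fintype.card_perm]
  refine Fintype.card_congr (Equiv.trans ?_
    ((Equiv.Perm.subtypeEquivSubtypePerm _).symm.trans (Equiv.permCongr e)))
  exact Equiv.subtypeEquivRight fun σ => forall_congr' fun t => by rw [not_le]

theorem sum_fixingBelow_mul_right {β : Type*} [AddCommMonoid β] {k : ℕ}
    {τ : Equiv.Perm (Fin q)} (hτ : τ ∈ fixingBelow q k) (g : Equiv.Perm (Fin q) → β) :
    ∑ σ ∈ fixingBelow q k, g (σ * τ) = ∑ σ ∈ fixingBelow q k, g σ :=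
  sum_equiv (Equiv.mulRight τ) (fun _ => (mul_mem_fixingBelow_iff hτ).symm) fun _ _ => rfl

theorem slots_self (q k : ℕ) : slots q k k = ∅ := by
  ext t
  simp only [slots, mem_filter, mem_univ, true_and, notMem_empty, iff_false]
  omega

theorem slots_union {k l m : ℕ} (hkl : k ≤ l) (hlm : l ≤ m) :
    slots q k l ∪ slots q l m = slots q k m := by
  ext t
  simp only [slots, mem_union, mem_filter, mem_univ, true_and]
  omega

theorem disjoint_slots (k l m : ℕ) : Disjoint (slots q k l) (slots q l m) :=
  disjoint_filter.2 fun _ _ h => by omega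

section contract

variable [Fintype κ] [DecidableEq κ]

theorem agreeOutside_self (k : ℕ) (K : Fin q → κ) : agreeOutside k k K = {K} := by
  ext K'
  simp only [agreeOutside, mem_filter, mem_univ, true_and, mem_singleton, funext_iff]
  exact forall_congr' fun t => by simp only [lt_or_ge, true_implies]

theorem sum_agreeOutside_agreeOutside {k l m : ℕ} (hkl : k ≤ l) (hlm : l ≤ m) (K : Fin q → κ)
    {β : Type*} [AddCommMonoid β] (g : (Fin q → κ) → β) :
    ∑ K' ∈ agreeOutside k l K, ∑ K'' ∈ agreeOutside l m K', g K''
      = ∑ K'' ∈ agreeOutside k m K, g K'' := by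
  rw [sum_comm' (t' := agreeOutside k m K)
    (s' := fun K'' => {fun t : Fin q => if (t : ℕ) < k ∨ l ≤ (t : ℕ) then K t else K'' t})]
  · simp
  intro K' K''
  simp only [agreeOutside, mem_filter, mem_univ, true_and, mem_singleton, funext_iff,
    ← forall_and]
  refine forall_congr' fun t => ?_
  split_ifs <;> grind

variable [CommSemiring R]

def contract (y : ι → κ → R) (k l : ℕ) : Family q κ ι R →ₗ[R] Family q κ ι R where
  toFun F K i := ∑ K' ∈ agreeOutside k l K, F K' i * ∏ t ∈ slots q k l, y (i t) (K' t)
  map_add' F G := by ext K i; simp [add_mul, sum_add_distrib]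
  map_smul' c F := by ext K i; simp [mul_sum, mul_assoc]

theorem contract_apply (y : ι → κ → R) (k l : ℕ) (F : Family q κ ι R) (K : Fin q → κ)
    (i : Fin q → ι) :
    contract y k l F K i
      = ∑ K' ∈ agreeOutside k l K, F K' i * ∏ t ∈ slots q k l, y (i t) (K' t) := rfl

theorem contract_self (y : ι → κ → R) (k : ℕ) :
    (contract y k k : Family q κ ι R →ₗ[R] _) = LinearMap.id := by
  refine LinearMap.ext fun F => funext₂ fun K i => ?_
  simp [contract_apply, agreeOutside_self, slots_self]

theorem contract_comp_contract (y : ι → κ → R) {k l m : ℕ} (hkl : k ≤ l) (hlm : l ≤ m) :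
    (contract y k l ∘ₗ contract y l m : Family q κ ι R →ₗ[R] _) = contract y k m := by
  refine LinearMap.ext fun F => funext₂ fun K i => ?_
  simp only [LinearMap.comp_apply, contract_apply, sum_mul]
  rw [← sum_agreeOutside_agreeOutside hkl hlm K]
  refine sum_congr rfl fun K' _ => sum_congr rfl fun K'' hK'' => ?_
  have hagree : ∀ t ∈ slots q k l, K' t = K'' t := fun t ht =>
    ((mem_filter.1 hK'').2 t (Or.inl (mem_filter.1 ht).2.2)).symm
  rw [mul_assoc, ← slots_union hkl hlm, prod_union (disjoint_slots k l m),
    mul_comm (∏ t ∈ slots q k l, _), prod_congr rfl fun t ht => congrArg (y (i t)) (hagree t ht)]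

end contract

section alternate

variable [CommRing R]

def alternate (k : ℕ) : Family q κ ι R →ₗ[R] Family q κ ι R where
  toFun F K i := ∑ σ ∈ fixingBelow q k, ((Equiv.Perm.sign σ : ℤ) : R) * F K (i ∘ σ)
  map_add' F G := by ext K i; simp [mul_add, sum_add_distrib]
  map_smul' c F := by ext K i; simp [mul_sum, mul_left_comm]

theorem alternate_apply (k : ℕ) (F : Family q κ ι R) (K : Fin q → κ) (i : Fin q → ι) :
    alternate k F K i = ∑ σ ∈ fixingBelow q k, ((Equiv.Perm.sign σ : ℤ) : R) * F K (i ∘ σ) :=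
  rfl

theorem alternate_eq_smul_of_skew {k : ℕ} (hk : k ≤ q) {F : Family q κ ι R}
    (hF : ∀ K i (σ : Equiv.Perm (Fin q)), (∀ t : Fin q, (t : ℕ) < k → σ t = t) →
      F K (i ∘ σ) = ((Equiv.Perm.sign σ : ℤ) : R) * F K i) :
    alternate k F = ((q - k).factorial : R) • F := by
  ext K i
  have h : ∀ σ ∈ fixingBelow q k, ((Equiv.Perm.sign σ : ℤ) : R) * F K (i ∘ σ) = F K i := by
    intro σ hσ
    rw [hF K i σ (mem_fixingBelow.1 hσ), ← mul_assoc, ← Int.cast_mul, ← Units.val_mul,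
      Int.units_mul_self, Units.val_one, Int.cast_one, one_mul]
  rw [alternate_apply, sum_congr rfl h, sum_const, card_fixingBelow hk, nsmul_eq_mul]
  rfl

theorem alternate_comp_alternate {k l : ℕ} (hkl : k ≤ l) (hl : l ≤ q) :
    (alternate k ∘ₗ alternate l : Family q κ ι R →ₗ[R] _)
      = ((q - l).factorial : R) • alternate k := by
  refine LinearMap.ext fun F => funext₂ fun K i => ?_
  calc ∑ σ ∈ fixingBelow q k, ((Equiv.Perm.sign σ : ℤ) : R) *
        ∑ τ ∈ fixingBelow q l, ((Equiv.Perm.sign τ : ℤ) : R) * F K (i ∘ σ ∘ τ)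
      = ∑ τ ∈ fixingBelow q l, ∑ σ ∈ fixingBelow q k,
          ((Equiv.Perm.sign (σ * τ) : ℤ) : R) * F K (i ∘ ⇑(σ * τ)) := by
        simp_rw [mul_sum]
        rw [sum_comm]
        simp [Equiv.Perm.sign_mul, mul_assoc]
    _ = ∑ τ ∈ fixingBelow q l, alternate k F K i :=
        sum_congr rfl fun τ hτ => sum_fixingBelow_mul_right (fixingBelow_mono hkl hτ)
          (fun ρ => ((Equiv.Perm.sign ρ : ℤ) : R) * F K (i ∘ ρ))
    _ = _ := by rw [sum_const, card_fixingBelow hl, nsmul_eq_mul]; rfl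

theorem contract_comp_alternate [Fintype κ] [DecidableEq κ] (y : ι → κ → R) {k l : ℕ} :
    (contract y k l ∘ₗ alternate l : Family q κ ι R →ₗ[R] _)
      = alternate l ∘ₗ contract y k l := by
  refine LinearMap.ext fun F => funext₂ fun K i => ?_
  simp only [LinearMap.comp_apply, contract_apply, alternate_apply, sum_mul, mul_sum]
  rw [sum_comm]
  refine sum_congr rfl fun σ hσ => sum_congr rfl fun K' _ => ?_
  have hfix : ∀ t ∈ slots q k l, i t = i (σ t) := fun t ht =>
    congrArg i (mem_fixingBelow.1 hσ t (mem_filter.1 ht).2.2).symm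
  rw [mul_assoc, prod_congr rfl fun t ht => congrArg (y · (K' t)) (hfix t ht)]
  rfl

end alternate

section normalized

variable {𝕜 : Type*} [Field 𝕜] [CharZero 𝕜] [Fintype κ] [DecidableEq κ]

def alternateContract (y : ι → κ → 𝕜) (k l : ℕ) : Family q κ ι 𝕜 →ₗ[𝕜] Family q κ ι 𝕜 :=
  ((q - k).factorial : 𝕜)⁻¹ • (alternate k ∘ₗ contract y k l)

theorem alternateContract_comp_alternateContract (y : ι → κ → 𝕜) {k l m : ℕ} (hkl : k ≤ l)
    (hlm : l ≤ m) (hlq : l ≤ q) :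
    (alternateContract y k l ∘ₗ alternateContract y l m : Family q κ ι 𝕜 →ₗ[𝕜] _)
      = alternateContract y k m := by
  have hfac : ((q - l).factorial : 𝕜) ≠ 0 := Nat.cast_ne_zero.2 (Nat.factorial_ne_zero _)
  calc _ = (((q - k).factorial : 𝕜)⁻¹ * ((q - l).factorial : 𝕜)⁻¹) •
        ((alternate k ∘ₗ alternate l) ∘ₗ (contract y k l ∘ₗ contract y l m)) := by
        simp only [alternateContract, LinearMap.smul_comp, LinearMap.comp_smul, smul_smul,
          LinearMap.comp_assoc]
        rw [← LinearMap.comp_assoc (contract y l m) (alternate l), contract_comp_alternate,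
          LinearMap.comp_assoc, mul_comm]
    _ = alternateContract y k m := by
        rw [alternate_comp_alternate hkl hlq, contract_comp_contract y hkl hlm,
          LinearMap.smul_comp, smul_smul, mul_assoc, inv_mul_cancel₀ hfac, mul_one]
        rfl

theorem alternateContract_self_of_skew (y : ι → κ → 𝕜) {k : ℕ} (hk : k ≤ q)
    {F : Family q κ ι 𝕜}
    (hF : ∀ K i (σ : Equiv.Perm (Fin q)), (∀ t : Fin q, (t : ℕ) < k → σ t = t) →
      F K (i ∘ σ) = ((Equiv.Perm.sign σ : ℤ) : 𝕜) * F K i) :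
    alternateContract y k k F = F := by
  have hfac : ((q - k).factorial : 𝕜) ≠ 0 := Nat.cast_ne_zero.2 (Nat.factorial_ne_zero _)
  rw [alternateContract, LinearMap.smul_apply, LinearMap.comp_apply, contract_self,
    LinearMap.id_apply, alternate_eq_smul_of_skew hk hF, smul_smul, inv_mul_cancel₀ hfac,
    one_smul]

end normalized

end ContactCoefficients

theorem contact_coefficients_inversion_general
    (q n M : ℕ) (y : Fin n → Fin M → ℝ)
    (A B : ℕ → (Fin q → Fin M) → (Fin q → Fin n) → ℝ)
    (hAskewI : ∀ k ≤ q, ∀ (K : Fin q → Fin M) (i : Fin q → Fin n) (σ : Equiv.Perm (Fin q)),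
      (∀ t : Fin q, (t : ℕ) < k → σ t = t) →
        A k K (i ∘ σ) = ((Equiv.Perm.sign σ : ℤ) : ℝ) * A k K i)
    (hrel : ∀ k ≤ q, ∀ (K : Fin q → Fin M) (i : Fin q → Fin n),
      B k K i = ∑ l ∈ Icc k q, (((q - k).choose (q - l) : ℕ) : ℝ) *
        (((q - k).factorial : ℕ) : ℝ)⁻¹ *
          ∑ σ ∈ univ.filter (fun σ : Equiv.Perm (Fin q) =>
              ∀ t : Fin q, (t : ℕ) < k → σ t = t),
            ((Equiv.Perm.sign σ : ℤ) : ℝ) *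
              ∑ K' ∈ univ.filter (fun K' : Fin q → Fin M =>
                  ∀ t : Fin q, ((t : ℕ) < k ∨ l ≤ (t : ℕ)) → K' t = K t),
                A l K' (i ∘ σ) *
                  ∏ t ∈ univ.filter (fun t : Fin q => k ≤ (t : ℕ) ∧ (t : ℕ) < l),
                    y (i (σ t)) (K' t)) :
    ∀ k ≤ q, ∀ (K : Fin q → Fin M) (i : Fin q → Fin n),
      A k K i = ∑ l ∈ Icc k q, (-1 : ℝ) ^ (l - k) *
        (((q - k).choose (q - l) : ℕ) : ℝ) * (((q - k).factorial : ℕ) : ℝ)⁻¹ *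
          ∑ σ ∈ univ.filter (fun σ : Equiv.Perm (Fin q) =>
              ∀ t : Fin q, (t : ℕ) < k → σ t = t),
            ((Equiv.Perm.sign σ : ℤ) : ℝ) *
              ∑ K' ∈ univ.filter (fun K' : Fin q → Fin M =>
                  ∀ t : Fin q, ((t : ℕ) < k ∨ l ≤ (t : ℕ)) → K' t = K t),
                B l K' (i ∘ σ) *
                  ∏ t ∈ univ.filter (fun t : Fin q => k ≤ (t : ℕ) ∧ (t : ℕ) < l),
                    y (i (σ t)) (K' t) := by
  have hinv := eq_sum_Icc_smul_of_eq_sum_Icc_smul (ContactCoefficients.alternateContract y)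
    (fun k l m hkl hlm hmq => ContactCoefficients.alternateContract_comp_alternateContract y hkl hlm
      (hlm.trans hmq))
    (fun k l => ((q - k).choose (q - l) : ℝ))
    (fun k l => (-1) ^ (l - k) * ((q - k).choose (q - l) : ℝ))
    (fun k m hkm hmq => by
      push_cast [mul_assoc]
      exact_mod_cast sum_Icc_neg_one_pow_mul_choose_mul_choose (q := q) hkm hmq)
    A B (fun k hk => ContactCoefficients.alternateContract_self_of_skew y hk (hAskewI k hk))
    (fun k hk => funext₂ fun K i => by
      simp only [hrel k hk K i, Finset.sum_apply, Pi.smul_apply, smul_eq_mul, mul_assoc]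
      rfl)
  intro k hk K i
  rw [hinv k hk]
  simp only [Finset.sum_apply, Pi.smul_apply, smul_eq_mul, mul_assoc]
  rfl

/-- Lemma 2.8: inversion of the contact-decomposition coefficient relations.
The families `A_k, B_k : (K₁,…,K_q ; i₁,…,i_q) → ℝ` (where `A k`/`B k` use the `K`-indices at
positions `< k` and the `i`-indices at positions `≥ k`) are skew-symmetric in those index
groups, and are related by
`B_k = ∑_{l=k}^q C(q−k, q−l) · Alt_{i} [ A_l · y_{i_{k+1}}^{K_{k+1}} ⋯ y_{i_l}^{K_l} ]`
(the `K`-indices in positions `k,…,l−1` being summed against the velocities `y`).  Then the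
system inverts to the same relation with `A` and `B` interchanged and signs `(−1)^{l−k}`. -/
theorem contact_coefficients_inversion
    (q n M : ℕ) (y : Fin n → Fin M → ℝ)
    (A B : ℕ → (Fin q → Fin M) → (Fin q → Fin n) → ℝ)
    (hAskewK : ∀ k ≤ q, ∀ (K : Fin q → Fin M) (i : Fin q → Fin n) (σ : Equiv.Perm (Fin q)),
      (∀ t : Fin q, k ≤ (t : ℕ) → σ t = t) →
        A k (K ∘ σ) i = ((Equiv.Perm.sign σ : ℤ) : ℝ) * A k K i)
    (hAskewI : ∀ k ≤ q, ∀ (K : Fin q → Fin M) (i : Fin q → Fin n) (σ : Equiv.Perm (Fin q)),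
      (∀ t : Fin q, (t : ℕ) < k → σ t = t) →
        A k K (i ∘ σ) = ((Equiv.Perm.sign σ : ℤ) : ℝ) * A k K i)
    (hBskewK : ∀ k ≤ q, ∀ (K : Fin q → Fin M) (i : Fin q → Fin n) (σ : Equiv.Perm (Fin q)),
      (∀ t : Fin q, k ≤ (t : ℕ) → σ t = t) →
        B k (K ∘ σ) i = ((Equiv.Perm.sign σ : ℤ) : ℝ) * B k K i)
    (hBskewI : ∀ k ≤ q, ∀ (K : Fin q → Fin M) (i : Fin q → Fin n) (σ : Equiv.Perm (Fin q)),
      (∀ t : Fin q, (t : ℕ) < k → σ t = t) →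
        B k K (i ∘ σ) = ((Equiv.Perm.sign σ : ℤ) : ℝ) * B k K i)
    (hrel : ∀ k ≤ q, ∀ (K : Fin q → Fin M) (i : Fin q → Fin n),
      B k K i = ∑ l ∈ Icc k q, (((q - k).choose (q - l) : ℕ) : ℝ) *
        (((q - k).factorial : ℕ) : ℝ)⁻¹ *
          ∑ σ ∈ univ.filter (fun σ : Equiv.Perm (Fin q) =>
              ∀ t : Fin q, (t : ℕ) < k → σ t = t),
            ((Equiv.Perm.sign σ : ℤ) : ℝ) *
              ∑ K' ∈ univ.filter (fun K' : Fin q → Fin M =>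
                  ∀ t : Fin q, ((t : ℕ) < k ∨ l ≤ (t : ℕ)) → K' t = K t),
                A l K' (i ∘ σ) *
                  ∏ t ∈ univ.filter (fun t : Fin q => k ≤ (t : ℕ) ∧ (t : ℕ) < l),
                    y (i (σ t)) (K' t)) :
    ∀ k ≤ q, ∀ (K : Fin q → Fin M) (i : Fin q → Fin n),
      A k K i = ∑ l ∈ Icc k q, (-1 : ℝ) ^ (l - k) *
        (((q - k).choose (q - l) : ℕ) : ℝ) * (((q - k).factorial : ℕ) : ℝ)⁻¹ *
          ∑ σ ∈ univ.filter (fun σ : Equiv.Perm (Fin q) =>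
              ∀ t : Fin q, (t : ℕ) < k → σ t = t),
            ((Equiv.Perm.sign σ : ℤ) : ℝ) *
              ∑ K' ∈ univ.filter (fun K' : Fin q → Fin M =>
                  ∀ t : Fin q, ((t : ℕ) < k ∨ l ≤ (t : ℕ)) → K' t = K t),
                B l K' (i ∘ σ) *
                  ∏ t ∈ univ.filter (fun t : Fin q => k ≤ (t : ℕ) ∧ (t : ℕ) < l),
                    y (i (σ t)) (K' t) :=
  contact_coefficients_inversion_general q n M y A B hAskewI hrel
end
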